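/- arXiv:2007.02988 — 6 statements merged into one kernel-verified Lean document; each statement's English description precedes it below -/
import Mathlib

section
/- Let R be an integral domain with at least two units and let n ≥ 2. Then the image of U_n(R) under the quotient map B_n(R) → PB_n(R) is a nilpotent normal subgroup of PB_n(R) that contains every nilpotent normal subgroup of PB_n(R); in particular it is the unique maximal normal nilpotent subgroup of PB_n(R), and hence it is invariant under every automorphism of PB_n(R). -/
/-!
The image of `U_n` is normal, being the kernel of the diagonal map `B_n → (Rˣ)ⁿ`, and nilpotent
because `U_n` is: if `x - 1` and `y - 1` vanish below the `k`-th and `l`-th superdiagonals, then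
`⁅x, y⁆ - 1 = (x y - y x) (y x)⁻¹` vanishes below the `(k + l)`-th.

For maximality, let the class of `g` lie in a normal nilpotent subgroup `M` of `PB_n` and let
`i < j`. Commuting `1 + E_ij` with `g` over and over gives matrices `1 + P` with `P` supported
in rows `≤ i` and columns `≥ j`, and each step multiplies the `(i, j)`-entry by
`1 - g_ii (g⁻¹)_jj`.
From the first step on their classes lie in `M`, deeper and deeper in its lower central series,
so eventually they are scalar; hence `(1 - g_ii (g⁻¹)_jj)^k = 0`, and `g_ii = g_jj` as `R` is
reduced. A matrix with constant diagonal is a scalar times a unitriangular one. Finally, every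
automorphism carries a largest normal nilpotent subgroup to a normal nilpotent subgroup, so it is
characteristic.
-/

open Matrix

/-- The `φ`-twisted conjugacy class of `g`. -/
def TwistedConjClass {G : Type*} [Group G] (φ : G ≃* G) (g : G) : Set G :=
  {h | ∃ x : G, h = x * g * (φ x)⁻¹}

/-- The set of Reidemeister (twisted conjugacy) classes of `φ`. -/
def ReidemeisterClasses {G : Type*} [Group G] (φ : G ≃* G) : Set (Set G) :=
  Set.range (TwistedConjClass φ)

/-- A group has property `R∞` if every automorphism has infinitely many
twisted conjugacy classes. -/
def PropertyRInfinity (G : Type*) [Group G] : Prop :=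
  ∀ φ : G ≃* G, (ReidemeisterClasses φ).Infinite

section Matrices

variable (n : ℕ) (R : Type*) [CommRing R]

/-- `B_n(R)`: the subgroup of upper triangular matrices in `GL_n(R)`. -/
def BorelGL : Subgroup (GL (Fin n) R) where
  carrier := {M | Matrix.BlockTriangular (M : Matrix (Fin n) (Fin n) R) id}
  one_mem' := by
    simpa using Matrix.blockTriangular_one (m := Fin n) (R := R) (b := id)
  mul_mem' := by
    intro a b ha hb
    simpa [Units.val_mul] using Matrix.BlockTriangular.mul ha hb
  inv_mem' := by
    intro a ha
    have : Invertible ((a : Matrix (Fin n) (Fin n) R)) := a.invertible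
    simpa [Matrix.coe_units_inv] using Matrix.blockTriangular_inv_of_blockTriangular ha

lemma diag_mul_of_blockTriangular {n : ℕ} {R : Type*} [CommRing R]
    {A B : Matrix (Fin n) (Fin n) R} (hA : A.BlockTriangular id)
    (hB : B.BlockTriangular id) (i : Fin n) :
    (A * B) i i = A i i * B i i := by
  rw [Matrix.mul_apply]
  apply Finset.sum_eq_single_of_mem i (Finset.mem_univ i)
  intro k _ hk
  rcases lt_or_gt_of_ne hk with h | h
  · rw [hA h, zero_mul]
  · rw [hB h, mul_zero]

/-- `U_n(R)`: the subgroup of upper unitriangular matrices in `GL_n(R)`. -/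
def Unitri : Subgroup (GL (Fin n) R) where
  carrier := {M | Matrix.BlockTriangular (M : Matrix (Fin n) (Fin n) R) id ∧
    ∀ i, (M : Matrix (Fin n) (Fin n) R) i i = 1}
  one_mem' := by
    refine ⟨by simpa using Matrix.blockTriangular_one (m := Fin n) (R := R) (b := id), ?_⟩
    intro i
    simp
  mul_mem' := by
    intro a b ha hb
    refine ⟨by simpa [Units.val_mul] using Matrix.BlockTriangular.mul ha.1 hb.1, ?_⟩
    intro i
    have := diag_mul_of_blockTriangular ha.1 hb.1 i
    simp only [Units.val_mul]
    rw [this, ha.2 i, hb.2 i, one_mul]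
  inv_mem' := by
    intro a ha
    have hinst : Invertible ((a : Matrix (Fin n) (Fin n) R)) := a.invertible
    have hinv : Matrix.BlockTriangular ((a⁻¹ : GL (Fin n) R) : Matrix (Fin n) (Fin n) R) id := by
      simpa [Matrix.coe_units_inv] using Matrix.blockTriangular_inv_of_blockTriangular ha.1
    refine ⟨hinv, ?_⟩
    intro i
    have h1 : ((a : Matrix (Fin n) (Fin n) R) * ((a⁻¹ : GL (Fin n) R) : Matrix (Fin n) (Fin n) R)) = 1 := by
      rw [← Units.val_mul, mul_inv_cancel, Units.val_one]
    have := diag_mul_of_blockTriangular ha.1 hinv i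
    rw [h1] at this
    have h2 : (1 : Matrix (Fin n) (Fin n) R) i i = 1 := Matrix.one_apply_eq i
    rw [h2, ha.2 i, one_mul] at this
    exact this.symm

/-- `Z_n(R)`: the subgroup of scalar matrices `u·1` with `u ∈ Rˣ`. -/
def ScalarZ : Subgroup (GL (Fin n) R) :=
  (Units.map (Matrix.scalar (Fin n) : R →+* Matrix (Fin n) (Fin n) R).toMonoidHom).range

/-- `U_n(R)` as a subgroup of `B_n(R)`. -/
def UB : Subgroup (BorelGL n R) :=
  (Unitri n R).comap (BorelGL n R).subtype

/-- `Z_n(R)` as a subgroup of `B_n(R)`. -/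
def ZB : Subgroup (BorelGL n R) :=
  (ScalarZ n R).comap (BorelGL n R).subtype

instance ZB_normal : (ZB n R).Normal := by
  constructor
  intro x hmem g
  obtain ⟨u, hu⟩ := hmem
  refine ⟨u, ?_⟩
  have hcomm : ((x : GL (Fin n) R) : Matrix (Fin n) (Fin n) R) *
      ((g : GL (Fin n) R) : Matrix (Fin n) (Fin n) R) =
      ((g : GL (Fin n) R) : Matrix (Fin n) (Fin n) R) *
      ((x : GL (Fin n) R) : Matrix (Fin n) (Fin n) R) := by
    have : ((x : GL (Fin n) R) : Matrix (Fin n) (Fin n) R) = Matrix.scalar (Fin n) (u : R) := by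
      have := congrArg (Units.val) hu
      simpa using this.symm
    rw [this]
    exact (Matrix.scalar_commute (u : R) (fun r' => mul_comm _ _) _).eq
  have key : ((g * x * g⁻¹ : BorelGL n R) : GL (Fin n) R) = (x : GL (Fin n) R) := by
    push_cast
    have : ((g : GL (Fin n) R) * (x : GL (Fin n) R)) = ((x : GL (Fin n) R) * (g : GL (Fin n) R)) := by
      ext1
      simpa [Units.val_mul] using hcomm.symm
    rw [this, mul_assoc, mul_inv_cancel, mul_one]
  show (Units.map (Matrix.scalar (Fin n) : R →+* Matrix (Fin n) (Fin n) R).toMonoidHom) u =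
    ((g * x * g⁻¹ : BorelGL n R) : GL (Fin n) R)
  rw [key]
  exact hu

end Matrices

section Proj

variable (n : ℕ) (R : Type*) [CommRing R]

/-- `PB_n(R) = B_n(R)/Z_n(R)`: the projective upper triangular group. -/
abbrev PB := ↥(BorelGL n R) ⧸ ZB n R

end Proj

section Affine

variable (R : Type*) [CommRing R]

/-- `Aff(R)`: the group of affine transformations of `R`, as matrices
with rows `(u, r)` and `(0, 1)` in `GL_2(R)`. -/
def AffGL : Subgroup (GL (Fin 2) R) where
  carrier := {M | (M : Matrix (Fin 2) (Fin 2) R) 1 0 = 0 ∧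
    (M : Matrix (Fin 2) (Fin 2) R) 1 1 = 1}
  one_mem' := by constructor <;> simp [Matrix.one_apply]
  mul_mem' := by
    intro a b ha hb
    constructor <;>
      simp [Units.val_mul, Matrix.mul_apply, Fin.sum_univ_two, ha.1, ha.2, hb.1, hb.2]
  inv_mem' := by
    intro a ha
    have h1 : ((a : Matrix (Fin 2) (Fin 2) R) *
        ((a⁻¹ : GL (Fin 2) R) : Matrix (Fin 2) (Fin 2) R)) = 1 := by
      rw [← Units.val_mul, mul_inv_cancel, Units.val_one]
    have h10 : ((a : Matrix (Fin 2) (Fin 2) R) *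
        ((a⁻¹ : GL (Fin 2) R) : Matrix (Fin 2) (Fin 2) R)) 1 0 =
        (1 : Matrix (Fin 2) (Fin 2) R) 1 0 := by rw [h1]
    have h11 : ((a : Matrix (Fin 2) (Fin 2) R) *
        ((a⁻¹ : GL (Fin 2) R) : Matrix (Fin 2) (Fin 2) R)) 1 1 =
        (1 : Matrix (Fin 2) (Fin 2) R) 1 1 := by rw [h1]
    rw [Matrix.mul_apply, Fin.sum_univ_two, ha.1, ha.2] at h10 h11
    simp only [Matrix.one_apply, zero_mul, one_mul, zero_add] at h10 h11
    constructor
    · simpa using h10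
    · simpa using h11

lemma blockTriangular_fin_two {R : Type*} [CommRing R] {M : Matrix (Fin 2) (Fin 2) R}
    (h : M 1 0 = 0) : M.BlockTriangular id := by
  intro i j hij
  fin_cases i <;> fin_cases j <;> first | exact h | exact absurd hij (by decide)

lemma unitri_conj_mem {n : ℕ} {R : Type*} [CommRing R] {g x : GL (Fin n) R}
    (hg : Matrix.BlockTriangular (g : Matrix (Fin n) (Fin n) R) id)
    (hx : x ∈ Unitri n R) : g * x * g⁻¹ ∈ Unitri n R := by
  have : Invertible ((g : Matrix (Fin n) (Fin n) R)) := g.invertible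
  have hginv : Matrix.BlockTriangular ((g⁻¹ : GL (Fin n) R) : Matrix (Fin n) (Fin n) R) id := by
    simpa [Matrix.coe_units_inv] using Matrix.blockTriangular_inv_of_blockTriangular hg
  have hgg : ∀ i, (g : Matrix (Fin n) (Fin n) R) i i *
      ((g⁻¹ : GL (Fin n) R) : Matrix (Fin n) (Fin n) R) i i = 1 := by
    intro i
    have h1 : ((g : Matrix (Fin n) (Fin n) R) *
        ((g⁻¹ : GL (Fin n) R) : Matrix (Fin n) (Fin n) R)) = 1 := by
      rw [← Units.val_mul, mul_inv_cancel, Units.val_one]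
    have := diag_mul_of_blockTriangular hg hginv i
    rw [h1, Matrix.one_apply_eq] at this
    exact this.symm
  constructor
  · simpa [Units.val_mul] using (hg.mul hx.1).mul hginv
  · intro i
    have e1 : ((g * x * g⁻¹ : GL (Fin n) R) : Matrix (Fin n) (Fin n) R) =
        ((g : Matrix (Fin n) (Fin n) R) * (x : Matrix (Fin n) (Fin n) R)) *
          ((g⁻¹ : GL (Fin n) R) : Matrix (Fin n) (Fin n) R) := by
      simp [Units.val_mul]
    rw [e1, diag_mul_of_blockTriangular (hg.mul hx.1) hginv i,
      diag_mul_of_blockTriangular hg hx.1 i, hx.2 i, mul_one, hgg i]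

/-- `U_2(R)` as a subgroup of `Aff(R)`. -/
def UAff : Subgroup ↥(AffGL R) := (Unitri 2 R).comap (AffGL R).subtype

instance UAff_normal : (UAff R).Normal := by
  constructor
  intro x hx g
  show ((g * x * g⁻¹ : ↥(AffGL R)) : GL (Fin 2) R) ∈ Unitri 2 R
  have : ((g * x * g⁻¹ : ↥(AffGL R)) : GL (Fin 2) R) =
      (g : GL (Fin 2) R) * (x : GL (Fin 2) R) * (g : GL (Fin 2) R)⁻¹ := by
    push_cast
    ring_nf
  rw [this]
  exact unitri_conj_mem (blockTriangular_fin_two g.2.1) hx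

end Affine

section Additive

/-- For an additive endomorphism `f` of `A`, the subgroup `{a - f a | a ∈ A}`. -/
def diffSubgroup {A : Type*} [AddCommGroup A] (f : A →+ A) : AddSubgroup A :=
  (AddMonoidHom.id A - f).range

/-- The subgroup `{(r - f s, s - f r) | r, s ∈ A}` of `A × A`. -/
def flipDiffSubgroup {A : Type*} [AddCommGroup A] (f : A →+ A) : AddSubgroup (A × A) :=
  (AddMonoidHom.id (A × A) -
    ((f.comp (AddMonoidHom.snd A A)).prod (f.comp (AddMonoidHom.fst A A)))).range

/-- Twisted conjugacy class for an automorphism of an (additive) abelian group. -/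
def AddTwistedConjClass {A : Type*} [AddCommGroup A] (α : A ≃+ A) (a : A) : Set A :=
  {b | ∃ x : A, b = x + a - α x}

def AddReidemeisterClasses {A : Type*} [AddCommGroup A] (α : A ≃+ A) : Set (Set A) :=
  Set.range (AddTwistedConjClass α)

def AddPropertyRInfinity (A : Type*) [AddCommGroup A] : Prop :=
  ∀ α : A ≃+ A, (AddReidemeisterClasses α).Infinite

end Additive

open scoped commutatorElement

namespace Subgroup

variable {G : Type*} [Group G]

theorem isNilpotent_map {G' : Type*} [Group G'] (f : G →* G') (S : Subgroup G)
    [Group.IsNilpotent S] : Group.IsNilpotent (S.map f) := by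
  obtain ⟨k, hk⟩ := (isNilpotent_iff_lowerCentralSeries S).mp inferInstance
  exact (isNilpotent_iff_lowerCentralSeries _).mpr
    ⟨k, by rw [← map_lowerCentralSeries, hk, map_bot]⟩

theorem iterate_commutator_mem_lowerCentralSeries {M : Subgroup G} [M.Normal] {g : G}
    (hg : g ∈ M) (x : G) (k : ℕ) :
    (fun y => ⁅y, g⁆)^[k + 1] x ∈ M.lowerCentralSeries k := by
  induction k with
  | zero => exact commutator_le_right ⊤ M (commutator_mem_commutator (mem_top x) hg)
  | succ k ih =>
    rw [Function.iterate_succ_apply', lowerCentralSeries_succ]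
    exact commutator_mem_commutator ih hg

theorem exists_iterate_commutator_eq_one {M : Subgroup G} [M.Normal] [Group.IsNilpotent M]
    {g : G} (hg : g ∈ M) (x : G) : ∃ k, (fun y => ⁅y, g⁆)^[k] x = 1 := by
  obtain ⟨k, hk⟩ := (isNilpotent_iff_lowerCentralSeries M).mp inferInstance
  exact ⟨k + 1, by simpa [hk] using iterate_commutator_mem_lowerCentralSeries hg x k⟩

theorem characteristic_of_forall_normal_isNilpotent_le {N : Subgroup G} [N.Normal]
    [Group.IsNilpotent N] (hN : ∀ M : Subgroup G, M.Normal → Group.IsNilpotent M → M ≤ N) :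
    N.Characteristic :=
  characteristic_iff_map_le.mpr fun ϕ =>
    hN _ (Normal.map inferInstance _ ϕ.surjective) (isNilpotent_map _ N)

end Subgroup

namespace Matrix

section Band

variable {n : ℕ} {R : Type*} [Ring R]

def VanishesBelowDiag (k : ℕ) (P : Matrix (Fin n) (Fin n) R) : Prop :=
  ∀ a b : Fin n, (b : ℕ) < a + k → P a b = 0

namespace VanishesBelowDiag

variable {k l : ℕ} {P Q : Matrix (Fin n) (Fin n) R}

theorem zero : VanishesBelowDiag k (0 : Matrix (Fin n) (Fin n) R) := fun _ _ _ => rfl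

theorem add (hP : VanishesBelowDiag k P) (hQ : VanishesBelowDiag k Q) :
    VanishesBelowDiag k (P + Q) := fun a b h => by simp [hP a b h, hQ a b h]

theorem neg (hP : VanishesBelowDiag k P) : VanishesBelowDiag k (-P) :=
  fun a b h => by simp [hP a b h]

theorem sub (hP : VanishesBelowDiag k P) (hQ : VanishesBelowDiag k Q) :
    VanishesBelowDiag k (P - Q) := sub_eq_add_neg P Q ▸ hP.add hQ.neg

theorem mul (hP : VanishesBelowDiag k P) (hQ : VanishesBelowDiag l Q) :
    VanishesBelowDiag (k + l) (P * Q) := by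
  intro a b h
  rw [mul_apply]
  refine Finset.sum_eq_zero fun c _ => ?_
  by_cases hc : (c : ℕ) < a + k
  · rw [hP a c hc, zero_mul]
  · rw [hQ c b (by omega), mul_zero]

theorem of_blockTriangular (h : P.BlockTriangular id) : VanishesBelowDiag 0 P :=
  fun _ _ hab => h (Fin.lt_def.mpr (by simpa using hab))

theorem sub_one_of_blockTriangular (h : P.BlockTriangular id) (hd : ∀ i, P i i = 1) :
    VanishesBelowDiag 1 (P - 1) := by
  intro a b hab
  rcases (Fin.le_def.mpr (Nat.lt_succ_iff.mp hab)).lt_or_eq with hba | rfl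
  · rw [sub_apply, h hba, one_apply_ne hba.ne', sub_zero]
  · rw [sub_apply, hd, one_apply_eq, sub_self]

theorem eq_zero (hP : VanishesBelowDiag k P) (hk : n ≤ k) : P = 0 :=
  ext fun a b => hP a b (by omega)

end VanishesBelowDiag

end Band

section Corner

variable {m R : Type*} [LinearOrder m] [Ring R] {i j : m}

def SupportedInCorner (i j : m) (P : Matrix m m R) : Prop :=
  ∀ a b, (i < a ∨ b < j) → P a b = 0

theorem supportedInCorner_single (i j : m) (r : R) : SupportedInCorner i j (single i j r) := by
  rintro a b (h | h) <;> simp [h.ne, h.ne']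

namespace SupportedInCorner

variable {P Q : Matrix m m R}

theorem sub (hP : SupportedInCorner i j P) (hQ : SupportedInCorner i j Q) :
    SupportedInCorner i j (P - Q) := fun a b h => by simp [hP a b h, hQ a b h]

theorem blockTriangular (hij : i < j) (hP : SupportedInCorner i j P) : P.BlockTriangular id :=
  fun a b hba => hP a b <| by
    by_contra! h
    exact lt_irrefl i (hij.trans_le (h.2.trans (hba.le.trans h.1)))

theorem mul_eq_zero [Fintype m] (hij : i < j) (hP : SupportedInCorner i j P)
    (hQ : SupportedInCorner i j Q) : P * Q = 0 := by
  ext a b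
  rw [mul_apply]
  refine Finset.sum_eq_zero fun c _ => ?_
  by_cases hc : c < j
  · rw [hP a c (Or.inr hc), zero_mul]
  · rw [hQ c b (Or.inl (hij.trans_le (not_lt.mp hc))), mul_zero]

theorem mul_blockTriangular [Fintype m] (hP : SupportedInCorner i j P)
    (hQ : Q.BlockTriangular id) : SupportedInCorner i j (P * Q) := by
  intro a b h
  rw [mul_apply]
  refine Finset.sum_eq_zero fun c _ => ?_
  rcases lt_or_ge c j with hc | hc
  · rw [hP a c (Or.inr hc), zero_mul]
  · rcases h with h | h
    · rw [hP a c (Or.inl h), zero_mul]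
    · rw [hQ (h.trans_le hc), mul_zero]

theorem blockTriangular_mul [Fintype m] (hP : SupportedInCorner i j P)
    (hQ : Q.BlockTriangular id) : SupportedInCorner i j (Q * P) := by
  intro a b h
  rw [mul_apply]
  refine Finset.sum_eq_zero fun c _ => ?_
  rcases lt_or_ge i c with hc | hc
  · rw [hP c b (Or.inl hc), mul_zero]
  · rcases h with h | h
    · rw [hQ (hc.trans_lt h), zero_mul]
    · rw [hP c b (Or.inr h), mul_zero]

theorem conj_apply [Fintype m] (hP : SupportedInCorner i j P) {Q Q' : Matrix m m R}
    (hQ : Q.BlockTriangular id) (hQ' : Q'.BlockTriangular id) :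
    (Q * P * Q') i j = Q i i * P i j * Q' j j := by
  have hQP : (Q * P) i j = Q i i * P i j := by
    rw [mul_apply]
    refine Finset.sum_eq_single i (fun c _ hc => ?_) (by simp)
    rcases hc.lt_or_gt with h | h
    · rw [hQ h, zero_mul]
    · rw [hP c j (Or.inl h), mul_zero]
  rw [mul_apply, Finset.sum_eq_single j (fun c _ hc => ?_) (by simp), hQP]
  rcases hc.lt_or_gt with h | h
  · rw [(hP.blockTriangular_mul hQ) i c (Or.inr h), zero_mul]
  · rw [hQ' h, mul_zero]

end SupportedInCorner

end Corner

end Matrix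

namespace BorelGL

variable {n : ℕ} {R : Type*} [CommRing R]

def toMatrix : BorelGL n R →* Matrix (Fin n) (Fin n) R :=
  (Units.coeHom _).comp (BorelGL n R).subtype

theorem blockTriangular_toMatrix (g : BorelGL n R) : (toMatrix g).BlockTriangular id := g.2

theorem toMatrix_mul_toMatrix_inv (g : BorelGL n R) : toMatrix g * toMatrix g⁻¹ = 1 := by
  rw [← map_mul, mul_inv_cancel, map_one]

theorem toMatrix_injective : Function.Injective (toMatrix : BorelGL n R →* _) :=
  fun _ _ h => Subtype.ext (Units.ext h)

theorem toMatrix_mul_apply_self (g h : BorelGL n R) (i : Fin n) :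
    toMatrix (g * h) i i = toMatrix g i i * toMatrix h i i := by
  rw [map_mul]
  exact diag_mul_of_blockTriangular g.2 h.2 i

def diagUnits : BorelGL n R →* (Fin n → Rˣ) where
  toFun g i := ⟨toMatrix g i i, toMatrix g⁻¹ i i,
    by rw [← toMatrix_mul_apply_self, mul_inv_cancel, map_one, one_apply_eq],
    by rw [← toMatrix_mul_apply_self, inv_mul_cancel, map_one, one_apply_eq]⟩
  map_one' := by ext; simp
  map_mul' g h := by ext i; exact toMatrix_mul_apply_self g h i

@[simp]
theorem val_diagUnits (g : BorelGL n R) (i : Fin n) : (diagUnits g i : R) = toMatrix g i i := rfl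

theorem ker_diagUnits : (diagUnits : BorelGL n R →* _).ker = UB n R := by
  ext g
  simp only [MonoidHom.mem_ker, funext_iff, Pi.one_apply, Units.ext_iff, val_diagUnits,
    Units.val_one]
  exact ⟨fun h => ⟨g.2, h⟩, fun h => h.2⟩

instance normal_UB : (UB n R).Normal := by
  rw [← ker_diagUnits]
  infer_instance

def scalarHom : Rˣ →* BorelGL n R :=
  (Units.map (scalar (Fin n) : R →+* Matrix (Fin n) (Fin n) R).toMonoidHom).codRestrict _
    fun _ => blockTriangular_diagonal _

theorem scalarHom_mem_ZB (c : Rˣ) : scalarHom c ∈ ZB n R := ⟨c, rfl⟩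

theorem diagUnits_scalarHom (c : Rˣ) : diagUnits (scalarHom c : BorelGL n R) = fun _ => c := by
  ext
  simp [scalarHom, toMatrix]

theorem toMatrix_apply_of_mem_ZB {z : BorelGL n R} (hz : z ∈ ZB n R) {i j : Fin n}
    (hij : i ≠ j) : toMatrix z i j = 0 := by
  obtain ⟨c, hc⟩ := hz
  change ((BorelGL n R).subtype z : Matrix (Fin n) (Fin n) R) i j = 0
  simp [← hc, hij]

theorem mk_mem_map_UB_of_diagUnits_eq {g : BorelGL n R}
    (hg : ∀ i j, diagUnits g i = diagUnits g j) :
    QuotientGroup.mk' (ZB n R) g ∈ (UB n R).map (QuotientGroup.mk' (ZB n R)) := by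
  obtain ⟨c, hc⟩ : ∃ c, diagUnits g = fun _ => c := by
    rcases isEmpty_or_nonempty (Fin n) with _ | ⟨⟨i⟩⟩
    · exact ⟨1, Subsingleton.elim _ _⟩
    · exact ⟨diagUnits g i, funext fun j => hg j i⟩
  have hz : QuotientGroup.mk' (ZB n R) (scalarHom c) = 1 :=
    (QuotientGroup.eq_one_iff _).mpr (scalarHom_mem_ZB c)
  refine Subgroup.mem_map.mpr ⟨g * (scalarHom c)⁻¹, ?_, ?_⟩
  · rw [← ker_diagUnits, MonoidHom.mem_ker, map_mul, map_inv, hc, diagUnits_scalarHom,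
      mul_inv_cancel]
  · rw [map_mul, map_inv, hz, inv_one, mul_one]

variable (n R) in
def unitriFiltration (k : ℕ) : Subgroup (BorelGL n R) where
  carrier := {g | VanishesBelowDiag k (toMatrix g - 1)}
  one_mem' := by
    show VanishesBelowDiag k (toMatrix 1 - 1)
    rw [map_one, sub_self]
    exact VanishesBelowDiag.zero
  mul_mem' {x y} hx hy := by
    have h : toMatrix (x * y) - 1 = (toMatrix x - 1) * toMatrix y + (toMatrix y - 1) := by
      rw [map_mul]; noncomm_ring
    show VanishesBelowDiag k _
    rw [h, ← add_zero k]
    exact (hx.mul (VanishesBelowDiag.of_blockTriangular (blockTriangular_toMatrix y))).add hy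
  inv_mem' {x} hx := by
    have h : toMatrix x⁻¹ - 1 = -((toMatrix x - 1) * toMatrix x⁻¹) := by
      rw [sub_mul, toMatrix_mul_toMatrix_inv, one_mul, neg_sub]
    show VanishesBelowDiag k _
    rw [h, ← add_zero k]
    exact (hx.mul (VanishesBelowDiag.of_blockTriangular (blockTriangular_toMatrix x⁻¹))).neg

theorem commutator_mem_unitriFiltration {k l : ℕ} {x y : BorelGL n R}
    (hx : x ∈ unitriFiltration n R k) (hy : y ∈ unitriFiltration n R l) :
    ⁅x, y⁆ ∈ unitriFiltration n R (k + l) := by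
  have h : toMatrix ⁅x, y⁆ - 1 = ((toMatrix x - 1) * (toMatrix y - 1) -
      (toMatrix y - 1) * (toMatrix x - 1)) * toMatrix (y * x)⁻¹ := by
    have hc : ⁅x, y⁆ = x * y * (y * x)⁻¹ := by group
    rw [show (toMatrix x - 1) * (toMatrix y - 1) - (toMatrix y - 1) * (toMatrix x - 1) =
      toMatrix (x * y) - toMatrix (y * x) by rw [map_mul, map_mul]; noncomm_ring,
      sub_mul, toMatrix_mul_toMatrix_inv, ← map_mul, hc]
  have hyx : VanishesBelowDiag (k + l) ((toMatrix y - 1) * (toMatrix x - 1)) :=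
    add_comm l k ▸ hy.mul hx
  show VanishesBelowDiag _ _
  rw [h, ← add_zero (k + l)]
  exact ((hx.mul hy).sub hyx).mul
    (VanishesBelowDiag.of_blockTriangular (blockTriangular_toMatrix (y * x)⁻¹))

theorem UB_le_unitriFiltration_one : UB n R ≤ unitriFiltration n R 1 :=
  fun g hg => VanishesBelowDiag.sub_one_of_blockTriangular g.2 hg.2

theorem unitriFiltration_eq_bot {k : ℕ} (hk : n ≤ k) : unitriFiltration n R k = ⊥ :=
  eq_bot_iff.mpr fun g hg =>
    toMatrix_injective (by rw [map_one, ← sub_eq_zero]; exact VanishesBelowDiag.eq_zero hg hk)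

theorem lowerCentralSeries_UB_le (k : ℕ) :
    (UB n R).lowerCentralSeries k ≤ unitriFiltration n R (k + 1) := by
  induction k with
  | zero => exact UB_le_unitriFiltration_one
  | succ k ih =>
    exact Subgroup.commutator_le.mpr fun x hx y hy =>
      commutator_mem_unitriFiltration (ih hx) (UB_le_unitriFiltration_one hy)

instance isNilpotent_UB : Group.IsNilpotent (UB n R) :=
  (Subgroup.isNilpotent_iff_lowerCentralSeries _).mpr
    ⟨n, eq_bot_iff.mpr <|
      (lowerCentralSeries_UB_le n).trans (unitriFiltration_eq_bot n.le_succ).le⟩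

variable {i j : Fin n}

theorem exists_toMatrix_eq_one_add_single (hij : i < j) :
    ∃ t : BorelGL n R, toMatrix t = 1 + single i j 1 :=
  ⟨⟨⟨transvection i j 1, transvection i j (-1),
      by rw [transvection_mul_transvection_same _ _ hij.ne, add_neg_cancel, transvection_zero],
      by rw [transvection_mul_transvection_same _ _ hij.ne, neg_add_cancel, transvection_zero]⟩,
    blockTriangular_one.add ((supportedInCorner_single i j 1).blockTriangular hij)⟩, rfl⟩

theorem toMatrix_commutator_of_supportedInCorner (hij : i < j) {P : Matrix (Fin n) (Fin n) R}
    (hP : SupportedInCorner i j P) {u : BorelGL n R} (hu : toMatrix u = 1 + P)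
    (g : BorelGL n R) :
    toMatrix ⁅u, g⁆ = 1 + (P - toMatrix g * P * toMatrix g⁻¹) := by
  have hu' : toMatrix u⁻¹ = 1 - P := by
    refine (left_inv_eq_right_inv ?_ (toMatrix_mul_toMatrix_inv u)).symm
    rw [hu, show (1 - P) * (1 + P) = 1 - P * P by noncomm_ring, hP.mul_eq_zero hij hP, sub_zero]
  have hPgP : P * toMatrix g * P = 0 :=
    (hP.mul_blockTriangular (blockTriangular_toMatrix g)).mul_eq_zero hij hP
  rw [commutatorElement_def, map_mul, map_mul, map_mul, hu, hu']
  calc (1 + P) * toMatrix g * (1 - P) * toMatrix g⁻¹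
      = toMatrix g * toMatrix g⁻¹ + P * (toMatrix g * toMatrix g⁻¹)
          - toMatrix g * P * toMatrix g⁻¹ - P * toMatrix g * P * toMatrix g⁻¹ := by
        noncomm_ring
    _ = 1 + (P - toMatrix g * P * toMatrix g⁻¹) := by
      rw [hPgP, toMatrix_mul_toMatrix_inv]; noncomm_ring

theorem exists_toMatrix_iterate_commutator (hij : i < j) (g : BorelGL n R) {t : BorelGL n R}
    (ht : toMatrix t = 1 + single i j 1) (k : ℕ) :
    ∃ P, SupportedInCorner i j P ∧ toMatrix ((fun u => ⁅u, g⁆)^[k] t) = 1 + P ∧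
      P i j = (1 - toMatrix g i i * toMatrix g⁻¹ j j) ^ k := by
  induction k with
  | zero => exact ⟨single i j 1, supportedInCorner_single i j 1, ht, by simp⟩
  | succ k ih =>
    obtain ⟨P, hP, hmat, hPij⟩ := ih
    have hg := blockTriangular_toMatrix g
    have hg' := blockTriangular_toMatrix g⁻¹
    refine ⟨_, hP.sub ((hP.blockTriangular_mul hg).mul_blockTriangular hg'), ?_, ?_⟩
    · rw [Function.iterate_succ_apply']
      exact toMatrix_commutator_of_supportedInCorner hij hP hmat g
    · rw [Matrix.sub_apply, hP.conj_apply hg hg', hPij, pow_succ]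
      ring

theorem diagUnits_eq_of_mk_mem [IsReduced R] {M : Subgroup (PB n R)} [M.Normal]
    [Group.IsNilpotent M] {g : BorelGL n R} (hg : QuotientGroup.mk' (ZB n R) g ∈ M)
    (hij : i < j) : diagUnits g i = diagUnits g j := by
  obtain ⟨t, ht⟩ := exists_toMatrix_eq_one_add_single (R := R) hij
  obtain ⟨k, hk⟩ := M.exists_iterate_commutator_eq_one hg (QuotientGroup.mk' (ZB n R) t)
  have hmk : Function.Semiconj (QuotientGroup.mk' (ZB n R)) (fun u => ⁅u, g⁆)
      (fun u => ⁅u, QuotientGroup.mk' (ZB n R) g⁆) := fun u => map_commutatorElement _ u g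
  have hZ : (fun u => ⁅u, g⁆)^[k] t ∈ ZB n R := by
    rw [← QuotientGroup.ker_mk' (ZB n R), MonoidHom.mem_ker, (hmk.iterate_right k) t, hk]
  obtain ⟨P, -, hmat, hPij⟩ := exists_toMatrix_iterate_commutator hij g ht k
  have hq : (1 - toMatrix g i i * toMatrix g⁻¹ j j) ^ k = 0 := by
    have h := toMatrix_apply_of_mem_ZB hZ hij.ne
    rwa [hmat, Matrix.add_apply, one_apply_ne hij.ne, zero_add, hPij] at h
  have h1 : ((diagUnits g i * diagUnits g⁻¹ j : Rˣ) : R) = 1 := by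
    rw [Units.val_mul, val_diagUnits, val_diagUnits]
    exact (sub_eq_zero.mp (eq_zero_of_pow_eq_zero hq)).symm
  rwa [map_inv, Pi.inv_apply, Units.val_eq_one, mul_inv_eq_one] at h1

theorem le_map_UB_of_isNilpotent [IsReduced R] (M : Subgroup (PB n R)) [M.Normal]
    [Group.IsNilpotent M] : M ≤ (UB n R).map (QuotientGroup.mk' (ZB n R)) := by
  intro m hm
  obtain ⟨g, rfl⟩ := QuotientGroup.mk'_surjective (ZB n R) m
  refine mk_mem_map_UB_of_diagUnits_eq fun i j => ?_
  rcases lt_trichotomy i j with h | rfl | h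
  · exact diagUnits_eq_of_mk_mem hm h
  · rfl
  · exact (diagUnits_eq_of_mk_mem hm h).symm

end BorelGL

theorem statement_1_general (R : Type*) [CommRing R] [IsDomain R]
    (n : ℕ) :
    (Subgroup.map (QuotientGroup.mk' (ZB n R)) (UB n R)).Normal ∧
    Group.IsNilpotent ↥(Subgroup.map (QuotientGroup.mk' (ZB n R)) (UB n R)) ∧
    (∀ M : Subgroup (PB n R), M.Normal → Group.IsNilpotent ↥M →
      M ≤ Subgroup.map (QuotientGroup.mk' (ZB n R)) (UB n R)) ∧
    (∀ ψ : PB n R ≃* PB n R,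
      Subgroup.map ψ.toMonoidHom (Subgroup.map (QuotientGroup.mk' (ZB n R)) (UB n R)) =
        Subgroup.map (QuotientGroup.mk' (ZB n R)) (UB n R)) := by
  have hnormal : ((UB n R).map (QuotientGroup.mk' (ZB n R))).Normal :=
    BorelGL.normal_UB.map _ (QuotientGroup.mk'_surjective _)
  have hmax : ∀ M : Subgroup (PB n R), M.Normal → Group.IsNilpotent M →
      M ≤ (UB n R).map (QuotientGroup.mk' (ZB n R)) :=
    fun M _ _ => BorelGL.le_map_UB_of_isNilpotent M
  have hnil := (UB n R).isNilpotent_map (QuotientGroup.mk' (ZB n R))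
  exact ⟨hnormal, hnil, hmax, Subgroup.characteristic_iff_map_eq.mp
    (Subgroup.characteristic_of_forall_normal_isNilpotent_le hmax)⟩

/-- Over an integral domain with at least two units, the image of `U_n(R)`
in `PB_n(R)` is the unique maximal normal nilpotent subgroup of `PB_n(R)`; in particular it
is invariant under every automorphism. -/
theorem statement_1 (R : Type*) [CommRing R] [IsDomain R] [Nontrivial Rˣ]
    (n : ℕ) (hn : 2 ≤ n) :
    (Subgroup.map (QuotientGroup.mk' (ZB n R)) (UB n R)).Normal ∧
    Group.IsNilpotent ↥(Subgroup.map (QuotientGroup.mk' (ZB n R)) (UB n R)) ∧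
    (∀ M : Subgroup (PB n R), M.Normal → Group.IsNilpotent ↥M →
      M ≤ Subgroup.map (QuotientGroup.mk' (ZB n R)) (UB n R)) ∧
    (∀ ψ : PB n R ≃* PB n R,
      Subgroup.map ψ.toMonoidHom (Subgroup.map (QuotientGroup.mk' (ZB n R)) (UB n R)) =
        Subgroup.map (QuotientGroup.mk' (ZB n R)) (UB n R)) :=
  statement_1_general R n
end

section
/- Let R be a commutative ring with unity and n ≥ 2, and suppose there exists a unit u ∈ R^× such that u − 1 is also a unit of R. Then the commutator subgroup of B_n(R) equals U_n(R). -/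
open Matrix

/-!
Reading off the diagonal is a homomorphism from `B_n(R)` to the abelian group `(Rⁿ)ˣ` whose
kernel is `U_n(R)`, so the commutator subgroup lies in `U_n(R)`. Conversely, if `d` is diagonal
with `u` in slot `i` and `1` elsewhere, then `d` scales the transvection `t_ij(s) = 1 + s E_ij`
to `t_ij(u s)`, so `⁅d, t_ij(s)⁆ = t_ij((u - 1) s)`; as `u - 1` is a unit, every upper
transvection `t_ij(c)` is a commutator in `B_n(R)`. Finally every upper
unitriangular matrix is a product of upper transvections: its entries above the diagonal can be
filled in one at a time, column by column, by left multiplication with transvections.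
-/

open scoped commutatorElement

section GeneralLinear

variable {ι R : Type*} [Fintype ι] [DecidableEq ι] [CommRing R]

def transvectionGL (i j : ι) (hij : i ≠ j) (c : R) : GL ι R where
  val := transvection i j c
  inv := transvection i j (-c)
  val_inv := by rw [transvection_mul_transvection_same _ _ hij, add_neg_cancel, transvection_zero]
  inv_val := by rw [transvection_mul_transvection_same _ _ hij, neg_add_cancel, transvection_zero]

def diagonalGL (δ : ι → Rˣ) : GL ι R where
  val := diagonal fun k => δ k
  inv := diagonal fun k => ↑(δ k)⁻¹
  val_inv := by simp [diagonal_mul_diagonal]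
  inv_val := by simp [diagonal_mul_diagonal]

lemma transvectionGL_mul_transvectionGL {i j : ι} (hij : i ≠ j) (c d : R) :
    transvectionGL i j hij c * transvectionGL i j hij d = transvectionGL i j hij (c + d) :=
  Units.ext (transvection_mul_transvection_same _ _ hij c d)

lemma inv_transvectionGL {i j : ι} (hij : i ≠ j) (c : R) :
    (transvectionGL i j hij c)⁻¹ = transvectionGL i j hij (-c) :=
  Units.ext rfl

lemma diagonalGL_mul_transvectionGL_mul_inv (δ : ι → Rˣ) {i j : ι} (hij : i ≠ j) (c : R) :
    diagonalGL δ * transvectionGL i j hij c * (diagonalGL δ)⁻¹ =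
      transvectionGL i j hij (δ i * c * ↑(δ j)⁻¹) := by
  ext a b
  change (diagonal (fun k => (δ k : R)) * transvection i j c *
    diagonal fun k => ((δ k)⁻¹ : Rˣ).val) a b = transvection i j (δ i * c * ↑(δ j)⁻¹) a b
  simp only [mul_diagonal, diagonal_mul, transvection, Matrix.add_apply, one_apply, single_apply]
  split_ifs <;> simp_all

lemma commutatorElement_diagonalGL_transvectionGL (δ : ι → Rˣ) {i j : ι} (hij : i ≠ j)
    (c : R) :
    ⁅diagonalGL δ, transvectionGL i j hij c⁆ =
      transvectionGL i j hij ((δ i * ↑(δ j)⁻¹ - 1) * c) := by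
  rw [commutatorElement_def, diagonalGL_mul_transvectionGL_mul_inv, inv_transvectionGL,
    transvectionGL_mul_transvectionGL]
  ring_nf

end GeneralLinear

section Unitriangular

variable {ι R : Type*} [DecidableEq ι] [CommRing R]

def unitriangularPart (M : Matrix ι ι R) (s : Finset (ι × ι)) : Matrix ι ι R :=
  of fun a b => if a = b then 1 else if (a, b) ∈ s then M a b else 0

@[simp]
lemma unitriangularPart_empty (M : Matrix ι ι R) : unitriangularPart M ∅ = 1 := by
  ext a b
  simp [unitriangularPart, one_apply]

variable [Fintype ι]

lemma transvection_mul_unitriangularPart {M : Matrix ι ι R} {s : Finset (ι × ι)} {i j : ι}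
    (hij : i ≠ j) (hs : (i, j) ∉ s) (hrow : ∀ p ∈ s, p.1 ≠ j) :
    transvection i j (M i j) * unitriangularPart M s = unitriangularPart M (insert (i, j) s) := by
  have hrow_j : ∀ b, unitriangularPart M s j b = if j = b then 1 else 0 := fun b => by
    have : (j, b) ∉ s := fun h => hrow _ h rfl
    simp [unitriangularPart, this]
  ext a b
  by_cases ha : a = i
  · subst ha
    rw [transvection_mul_apply_same, hrow_j]
    by_cases hb : b = j
    · subst hb
      simp [unitriangularPart, hij, hs]
    · simp [unitriangularPart, hb, Ne.symm hb]
  · rw [transvection_mul_apply_of_ne _ _ _ _ ha]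
    simp [unitriangularPart, ha]

variable [LinearOrder ι]

lemma unitriangularPart_mem {S : Submonoid (Matrix ι ι R)}
    (hS : ∀ i j : ι, i < j → ∀ c : R, transvection i j c ∈ S) (M : Matrix ι ι R)
    (s : Finset (ι × ι)) (hs : ∀ p ∈ s, p.1 < p.2) : unitriangularPart M s ∈ S := by
  induction s using Finset.induction_on_max_value (fun p : ι × ι => toLex (p.2, p.1)) with
  | empty => simp [S.one_mem]
  | insert a s ha hmax ih =>
    obtain ⟨i, j⟩ := a
    -- Positions are added column by column, so row `j` of the partial matrix is still trivial.
    have hrow : ∀ p ∈ s, p.1 ≠ j := fun p hp => by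
      have hpj : p.2 ≤ j := (Prod.Lex.le_iff.1 (hmax p hp)).elim le_of_lt (·.1.le)
      exact (lt_of_lt_of_le (hs p (Finset.mem_insert_of_mem hp)) hpj).ne
    have hij : i < j := hs (i, j) (Finset.mem_insert_self _ _)
    rw [← transvection_mul_unitriangularPart hij.ne ha hrow]
    exact S.mul_mem (hS i j hij _) (ih fun p hp => hs p (Finset.mem_insert_of_mem hp))

lemma unitriangularPart_eq_self {M : Matrix ι ι R} (hM : M.BlockTriangular id)
    (hdiag : ∀ i, M i i = 1) :
    unitriangularPart M (Finset.univ.filter fun p : ι × ι => p.1 < p.2) = M := by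
  ext a b
  rcases lt_trichotomy a b with h | rfl | h
  · simp [unitriangularPart, h, h.ne]
  · simp [unitriangularPart, hdiag]
  · simp [unitriangularPart, h.ne', h.not_gt, hM h]

theorem mem_submonoid_of_unitriangular {S : Submonoid (Matrix ι ι R)}
    (hS : ∀ i j : ι, i < j → ∀ c : R, transvection i j c ∈ S) {M : Matrix ι ι R}
    (hM : M.BlockTriangular id) (hdiag : ∀ i, M i i = 1) : M ∈ S := by
  rw [← unitriangularPart_eq_self hM hdiag]
  exact unitriangularPart_mem hS M _ fun p hp => (Finset.mem_filter.1 hp).2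

end Unitriangular

section Borel

variable {n : ℕ} {R : Type*} [CommRing R]

def borelDiagonal : BorelGL n R →* (Fin n → R) where
  toFun g i := ((g : GL (Fin n) R) : Matrix (Fin n) (Fin n) R) i i
  map_one' := by ext; simp
  map_mul' g h := funext (diag_mul_of_blockTriangular g.2 h.2)

lemma mem_UB_iff_borelDiagonal_eq_one {g : BorelGL n R} : g ∈ UB n R ↔ borelDiagonal g = 1 :=
  ⟨fun hg => funext hg.2, fun hg => ⟨g.2, congrFun hg⟩⟩

lemma commutator_le_UB : commutator (BorelGL n R) ≤ UB n R :=
  calc commutator (BorelGL n R)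
    _ ≤ borelDiagonal.toHomUnits.ker := Abelianization.commutator_subset_ker _
    _ = UB n R := by
      ext g
      rw [MonoidHom.mem_ker, mem_UB_iff_borelDiagonal_eq_one, Units.ext_iff]
      rfl

lemma unitri_le_of_transvectionGL_mem {K : Subgroup (GL (Fin n) R)}
    (hK : ∀ (i j : Fin n) (hij : i < j) (c : R), transvectionGL i j hij.ne c ∈ K) :
    Unitri n R ≤ K := by
  intro x hx
  obtain ⟨y, hy, hyx⟩ := mem_submonoid_of_unitriangular
    (S := K.toSubmonoid.map (Units.coeHom _)) (fun i j hij c => ⟨_, hK i j hij c, rfl⟩) hx.1 hx.2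
  rwa [← Units.ext hyx]

lemma transvectionGL_mem_map_commutator {u : Rˣ} (hu : IsUnit ((u : R) - 1)) {i j : Fin n}
    (hij : i < j) (c : R) :
    transvectionGL i j hij.ne c ∈ (commutator (BorelGL n R)).map (BorelGL n R).subtype := by
  obtain ⟨v, hv⟩ := hu
  have key : ⁅diagonalGL (Pi.mulSingle i u), transvectionGL i j hij.ne (↑v⁻¹ * c)⁆ =
      transvectionGL i j hij.ne c := by
    rw [commutatorElement_diagonalGL_transvectionGL]
    simp [hij.ne', ← hv]
  let d : BorelGL n R := ⟨diagonalGL (Pi.mulSingle i u), blockTriangular_diagonal _⟩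
  let t : BorelGL n R := ⟨transvectionGL i j hij.ne (↑v⁻¹ * c), blockTriangular_transvection hij.le _⟩
  refine ⟨⁅d, t⁆, Subgroup.commutator_mem_commutator (Subgroup.mem_top _) (Subgroup.mem_top _), ?_⟩
  rw [map_commutatorElement]
  exact key

end Borel

theorem statement_2_general (R : Type*) [CommRing R] (n : ℕ)
    (h : ∃ u : Rˣ, IsUnit ((u : R) - 1)) :
    commutator ↥(BorelGL n R) = UB n R := by
  obtain ⟨u, hu⟩ := h
  refine le_antisymm commutator_le_UB fun g hg => ?_
  have hUnitri : Unitri n R ≤ (commutator (BorelGL n R)).map (BorelGL n R).subtype :=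
    unitri_le_of_transvectionGL_mem fun i j hij c => transvectionGL_mem_map_commutator hu hij c
  exact (Subgroup.mem_map_iff_mem (BorelGL n R).subtype_injective).1 (hUnitri hg)

/-- If some unit `u` of the commutative ring `R` is such that `u - 1` is
also a unit, then the commutator subgroup of `B_n(R)` equals `U_n(R)` (for `n ≥ 2`). -/
theorem statement_2 (R : Type*) [CommRing R] (n : ℕ) (hn : 2 ≤ n)
    (h : ∃ u : Rˣ, IsUnit ((u : R) - 1)) :
    commutator ↥(BorelGL n R) = UB n R :=
  statement_2_general R n h
end

section
/- Let R be a commutative ring with unity and n ≥ 2, and suppose every element of R can be written as a sum of two units of R. Then the commutator subgroup of B_n(R) equals U_n(R). -/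
open Matrix

/-! Taking diagonals is multiplicative on upper triangular matrices, with values in a
commutative group, so commutators in `B_n(R)` are unitriangular. Conversely, writing `1 = u + v`
with units `u, v` makes `u - 1 = -v` a unit, and `⁅diag(1, …, u, …, 1), t_ij(s)⁆` equals
`t_ij((u - 1) s)` (with `u` in position `i`), so every elementary transvection `t_ij(c)`, `i < j`,
is a commutator in `B_n(R)`. Finally every unitriangular matrix is a product of such
transvections: multiplying on the right by a transvection clears an off-diagonal entry in a
topmost nonzero row without creating new ones. -/

open scoped commutatorElement

namespace Matrix

variable {R : Type*} [CommRing R]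

def offDiagSupport {m α : Type*} [Zero α] (M : Matrix m m α) : Set (m × m) :=
  {p | p.1 ≠ p.2 ∧ M p.1 p.2 ≠ 0}

lemma eq_one_of_offDiagSupport_eq_empty {m : Type*} [DecidableEq m] {M : Matrix m m R}
    (hdiag : ∀ k, M k k = 1) (h : offDiagSupport M = ∅) : M = 1 := by
  ext k l
  by_cases hkl : k = l
  · subst hkl
    rw [hdiag, one_apply_eq]
  · rw [one_apply_ne hkl]
    by_contra hne
    exact (Set.eq_empty_iff_forall_notMem.1 h (k, l)) ⟨hkl, hne⟩

section

variable {m : Type*} [Fintype m] [DecidableEq m]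

lemma offDiagSupport_mul_transvection_ssubset [LinearOrder m] {M : Matrix m m R}
    (hM : M.BlockTriangular id) (hdiag : ∀ k, M k k = 1) {i j : m}
    (hij : (i, j) ∈ offDiagSupport M) (hmin : ∀ q ∈ offDiagSupport M, i ≤ q.1) :
    offDiagSupport (M * Matrix.transvection i j (-M i j)) ⊂ offDiagSupport M := by
  have hcol : ∀ k, k ≠ i → M k i = 0 := by
    intro k hk
    rcases hk.lt_or_gt with hki | hik
    · by_contra hne
      exact (hmin (k, i) ⟨hk, hne⟩).not_gt hki
    · exact hM hik
  have hsub : offDiagSupport (M * Matrix.transvection i j (-M i j)) ⊆ offDiagSupport M := by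
    rintro ⟨k, l⟩ ⟨hkl, hne⟩
    refine ⟨hkl, ?_⟩
    by_cases hlj : l = j
    · subst hlj
      by_cases hki : k = i
      · subst hki
        simp [mul_transvection_apply_same, hdiag] at hne
      · simpa [mul_transvection_apply_same, hcol k hki] using hne
    · rwa [mul_transvection_apply_of_ne _ _ _ _ hlj] at hne
  refine (Set.ssubset_iff_of_subset hsub).2 ⟨(i, j), hij, fun h => h.2 ?_⟩
  simp [mul_transvection_apply_same, hdiag]

lemma diagonal_mul_transvection_mul_diagonal {a b : m → R} (hab : ∀ k, a k * b k = 1)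
    (i j : m) (c : R) :
    diagonal a * Matrix.transvection i j c * diagonal b =
      Matrix.transvection i j (a i * c * b j) := by
  ext k l
  simp only [mul_diagonal, diagonal_mul, Matrix.transvection, add_apply, one_apply, single_apply]
  split_ifs <;> simp_all [mul_assoc, add_mul, mul_add]

end

end Matrix

namespace Matrix.GeneralLinearGroup

variable {m : Type*} [Fintype m] [DecidableEq m] {R : Type*} [CommRing R]

def diagonal (d : m → Rˣ) : GL m R :=
  ⟨Matrix.diagonal fun k => d k, Matrix.diagonal fun k => ↑(d k)⁻¹, by simp, by simp⟩

lemma commutatorElement_diagonal_transvection (d : m → Rˣ) {i j : m} (hij : i ≠ j) (c : R) :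
    ⁅diagonal d, (SpecialLinearGroup.transvection hij c : GL m R)⁆ =
      SpecialLinearGroup.transvection hij ((d i * ↑(d j)⁻¹ - 1) * c) := by
  rw [commutatorElement_def, ← map_inv, SpecialLinearGroup.transvection_inv]
  refine Units.ext (?_ : Matrix.diagonal _ * Matrix.transvection i j c * Matrix.diagonal _ *
    Matrix.transvection i j (-c) = Matrix.transvection i j _)
  rw [diagonal_mul_transvection_mul_diagonal fun k => Units.mul_inv (d k),
    transvection_mul_transvection_same _ _ hij]
  congr 1
  ring

end Matrix.GeneralLinearGroup

section Unitriangular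

variable {n : ℕ} {R : Type*} [CommRing R]

lemma transvection_mem_Unitri {i j : Fin n} (hij : i < j) (c : R) :
    (SpecialLinearGroup.transvection hij.ne c : GL (Fin n) R) ∈ Unitri n R :=
  ⟨blockTriangular_transvection hij.le c, fun k => by
    change Matrix.transvection i j c k k = 1
    simp only [Matrix.transvection, Matrix.add_apply, one_apply_eq, single_apply, add_eq_left,
      ite_eq_right_iff, and_imp]
    rintro rfl rfl
    exact (lt_irrefl _ hij).elim⟩

theorem Unitri_le_of_transvection_mem {H : Subgroup (GL (Fin n) R)}
    (hH : ∀ {i j : Fin n} (hij : i < j) (c : R),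
      (SpecialLinearGroup.transvection hij.ne c : GL (Fin n) R) ∈ H) :
    Unitri n R ≤ H := by
  intro M hM
  induction hcard : (offDiagSupport (M : Matrix (Fin n) (Fin n) R)).ncard
    using Nat.strong_induction_on generalizing M with
  | _ k ih =>
  subst hcard
  rcases (offDiagSupport (M : Matrix (Fin n) (Fin n) R)).eq_empty_or_nonempty with hempty | hne
  · obtain rfl : M = 1 := Units.ext (eq_one_of_offDiagSupport_eq_empty hM.2 hempty)
    exact H.one_mem
  obtain ⟨⟨i, j⟩, hij, hmin⟩ := Set.exists_min_image _ Prod.fst (Set.toFinite _) hne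
  have hlt : i < j := lt_of_le_of_ne (not_lt.1 fun h => hij.2 (hM.1 h)) hij.1
  set t := SpecialLinearGroup.toGL <|
    SpecialLinearGroup.transvection hlt.ne (-(M : Matrix _ _ R) i j)
  have hMt : M * t ∈ H := ih _ (Set.ncard_lt_ncard
    (offDiagSupport_mul_transvection_ssubset hM.1 hM.2 hij hmin) (Set.toFinite _))
    (mul_mem hM (transvection_mem_Unitri hlt _)) rfl
  have htH : t⁻¹ ∈ H := H.inv_mem (hH hlt _)
  simpa only [mul_inv_cancel_right] using mul_mem hMt htH

end Unitriangular

namespace BorelGL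

variable {n : ℕ} {R : Type*} [CommRing R]

def diagHom : BorelGL n R →* (Fin n → R) where
  toFun g i := ((g : GL (Fin n) R) : Matrix (Fin n) (Fin n) R) i i
  map_one' := by ext i; simp
  map_mul' g h := by ext i; exact diag_mul_of_blockTriangular g.2.out h.2.out i

lemma mem_UB_iff {g : BorelGL n R} : g ∈ UB n R ↔ diagHom g = 1 :=
  (and_iff_right g.2.out).trans funext_iff.symm

lemma commutator_le_UB : commutator (BorelGL n R) ≤ UB n R := by
  refine (Abelianization.commutator_subset_ker (diagHom (n := n) (R := R)).toHomUnits).trans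
    fun g hg => ?_
  rw [mem_UB_iff]
  exact congrArg Units.val hg

lemma transvection_mem_map_commutator {u : Rˣ} (hu : IsUnit ((u : R) - 1)) {i j : Fin n}
    (hij : i < j) (c : R) :
    (SpecialLinearGroup.transvection hij.ne c : GL (Fin n) R) ∈
      (commutator (BorelGL n R)).map (BorelGL n R).subtype := by
  let D := GeneralLinearGroup.diagonal (Pi.mulSingle i u)
  have hD : D ∈ BorelGL n R := blockTriangular_diagonal _
  have hT := (transvection_mem_Unitri hij (↑hu.unit⁻¹ * c : R)).1
  refine ⟨⁅⟨D, hD⟩, ⟨_, hT⟩⁆, commutator_def (BorelGL n R) ▸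
    Subgroup.commutator_mem_commutator (Subgroup.mem_top _) (Subgroup.mem_top _), ?_⟩
  rw [map_commutatorElement, Subgroup.coe_subtype,
    GeneralLinearGroup.commutatorElement_diagonal_transvection]
  simp [Pi.mulSingle_eq_of_ne hij.ne', ← mul_assoc, hu.mul_val_inv]

lemma UB_le_commutator {u : Rˣ} (hu : IsUnit ((u : R) - 1)) :
    UB n R ≤ commutator (BorelGL n R) := fun _ hg =>
  (Subgroup.mem_map_iff_mem Subtype.val_injective).1
    (Unitri_le_of_transvection_mem (transvection_mem_map_commutator hu) hg)

end BorelGL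

theorem statement_3_general (R : Type*) [CommRing R] (n : ℕ)
    (h : ∀ r : R, ∃ u v : Rˣ, r = (u : R) + (v : R)) :
    commutator ↥(BorelGL n R) = UB n R := by
  obtain ⟨u, v, huv⟩ := h 1
  have hu : IsUnit ((u : R) - 1) := by
    rw [huv, sub_add_cancel_left]
    exact (-v).isUnit
  exact le_antisymm BorelGL.commutator_le_UB (BorelGL.UB_le_commutator hu)

/-- If every element of the commutative ring `R` is a sum of two units,
then the commutator subgroup of `B_n(R)` equals `U_n(R)` (for `n ≥ 2`). -/
theorem statement_3 (R : Type*) [CommRing R] (n : ℕ) (hn : 2 ≤ n)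
    (h : ∀ r : R, ∃ u v : Rˣ, r = (u : R) + (v : R)) :
    commutator ↥(BorelGL n R) = UB n R :=
  statement_3_general R n h
end

section
/- There exists a group automorphism φ of B_2(ℤ[t]) with φ(U_2(ℤ[t])) ≠ U_2(ℤ[t]); explicitly, letting ε : (ℤ[t],+) → {±1} be the group homomorphism sending a polynomial to (−1) raised to the sum of its coefficients, the map sending the matrix with rows (u, r), (0, v) to the scalar matrix ε(r)·1_2 times that matrix is such an automorphism. In particular, U_2(ℤ[t]) is not a characteristic subgroup of B_2(ℤ[t]). -/
open Matrix

/-- `ε(r) = (-1)^(sum of the coefficients of r)` as a unit of `ℤ[t]`; the sum of the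
coefficients of `r` is `r.eval 1`. -/
noncomputable def epsUnit (r : Polynomial ℤ) : (Polynomial ℤ)ˣ :=
  (-1 : (Polynomial ℤ)ˣ) ^ (Polynomial.eval 1 r)

/-!
Since `ε` is a character of `(ℤ[t], +)` and the units of `ℤ[t]` are `±1`, the map
`M ↦ ε(M₀₁)` is a homomorphism `B₂(ℤ[t]) → {±1}`: `(MN)₀₁ = M₀₀ N₀₁ + M₀₁ N₁₁` with `M₀₀`,
`N₁₁` units. Composed with the scalar embedding it is a central character `χ` which is trivial on
its own image (scalar matrices have vanishing corner), and twisting the identity by such a `χ`,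
`g ↦ χ(g) g`, is an automorphism. It sends `[1, 1; 0, 1] ∈ U₂` to its negative, which is not
unitriangular.
-/

open Polynomial Matrix.GeneralLinearGroup

section CentralTwist

variable {G : Type*} [Group G]

def centralTwist (χ : G →* G) (hcomm : ∀ g h, Commute (χ g) h) (hχ : ∀ g, χ (χ g) = 1) :
    G ≃* G where
  toFun g := χ g * g
  invFun g := (χ g)⁻¹ * g
  left_inv g := by simp [hχ]
  right_inv g := by simp [hχ]
  map_mul' g h := by
    rw [map_mul, mul_assoc, mul_assoc, ← mul_assoc (χ h), (hcomm h g).eq]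
    simp only [mul_assoc]

end CentralTwist

section Borel

variable {n : ℕ} {R : Type*} [CommRing R]

theorem isUnit_apply_self_of_mem_borelGL {M : GL (Fin n) R} (hM : M ∈ BorelGL n R)
    (i : Fin n) : IsUnit ((M : Matrix (Fin n) (Fin n) R) i i) := by
  have hdet := (Matrix.isUnit_iff_isUnit_det _).mp M.isUnit
  rw [Matrix.det_of_isUpperTriangular hM] at hdet
  exact IsUnit.prod_iff.mp hdet i (Finset.mem_univ i)

variable (n R) in
def scalarBorel : Rˣ →* BorelGL n R :=
  (Units.map (Matrix.scalar (Fin n) : R →+* Matrix (Fin n) (Fin n) R).toMonoidHom).codRestrict _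
    fun _ => Matrix.blockTriangular_diagonal _

theorem coe_scalarBorel (u : Rˣ) :
    (((scalarBorel n R u : BorelGL n R) : GL (Fin n) R) : Matrix (Fin n) (Fin n) R) =
      Matrix.scalar (Fin n) (u : R) :=
  rfl

theorem scalarBorel_commute (u : Rˣ) (M : BorelGL n R) : Commute (scalarBorel n R u) M := by
  refine Subtype.ext (Units.ext ?_)
  simp only [Subgroup.coe_mul, Units.val_mul, coe_scalarBorel]
  exact (Matrix.scalar_commute _ (fun _ => Commute.all _ _) _).eq

theorem coe_scalarBorel_mul (u : Rˣ) (M : BorelGL n R) :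
    (((scalarBorel n R u * M : BorelGL n R) : GL (Fin n) R) : Matrix (Fin n) (Fin n) R) =
      (u : R) • ((M : GL (Fin n) R) : Matrix (Fin n) (Fin n) R) := by
  rw [Subgroup.coe_mul, Units.val_mul, coe_scalarBorel, Matrix.scalar_apply,
    Matrix.smul_eq_diagonal_mul]

theorem upperRightHom_mem_unitri (x : R) : upperRightHom x ∈ Unitri 2 R := by
  refine ⟨fun i j hij => ?_, fun i => ?_⟩
  · fin_cases i <;> fin_cases j <;> simp_all
  · fin_cases i <;> simp

end Borel

section Sign

theorem epsUnit_zero : epsUnit 0 = 1 := by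
  simp [epsUnit]

theorem epsUnit_one : epsUnit 1 = -1 := by
  simp [epsUnit]

theorem epsUnit_add (r s : ℤ[X]) : epsUnit (r + s) = epsUnit r * epsUnit s := by
  simp only [epsUnit, eval_add, _root_.zpow_add]

theorem epsUnit_mul_of_isUnit {u : ℤ[X]} (hu : IsUnit u) (r : ℤ[X]) :
    epsUnit (u * r) = epsUnit r := by
  have hu1 : IsUnit (eval 1 u) := hu.map (evalRingHom 1)
  simp only [epsUnit, eval_mul, _root_.zpow_mul]
  rcases Int.isUnit_iff.mp hu1 with h | h <;> simp [h]

theorem epsUnit_mul_of_isUnit_right (r : ℤ[X]) {u : ℤ[X]} (hu : IsUnit u) :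
    epsUnit (r * u) = epsUnit r := by
  rw [mul_comm, epsUnit_mul_of_isUnit hu]

noncomputable def borelSign : BorelGL 2 ℤ[X] →* ℤ[X]ˣ where
  toFun M := epsUnit (((M : GL (Fin 2) ℤ[X]) : Matrix (Fin 2) (Fin 2) ℤ[X]) 0 1)
  map_one' := by simp [epsUnit_zero]
  map_mul' M N := by
    simp only [Subgroup.coe_mul, Units.val_mul, Matrix.mul_apply, Fin.sum_univ_two]
    rw [epsUnit_add, epsUnit_mul_of_isUnit (isUnit_apply_self_of_mem_borelGL M.2 0),
      epsUnit_mul_of_isUnit_right _ (isUnit_apply_self_of_mem_borelGL N.2 1), mul_comm]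

noncomputable def borelSignTwist : BorelGL 2 ℤ[X] ≃* BorelGL 2 ℤ[X] :=
  centralTwist ((scalarBorel 2 ℤ[X]).comp borelSign) (fun _ _ => scalarBorel_commute _ _)
    fun _ => by simp [borelSign, coe_scalarBorel, epsUnit_zero]

theorem coe_borelSignTwist (M : BorelGL 2 ℤ[X]) :
    (((borelSignTwist M : BorelGL 2 ℤ[X]) : GL (Fin 2) ℤ[X]) : Matrix (Fin 2) (Fin 2) ℤ[X]) =
      (epsUnit (((M : GL (Fin 2) ℤ[X]) : Matrix (Fin 2) (Fin 2) ℤ[X]) 0 1) : ℤ[X]) •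
        ((M : GL (Fin 2) ℤ[X]) : Matrix (Fin 2) (Fin 2) ℤ[X]) :=
  coe_scalarBorel_mul _ _

theorem map_borelSignTwist_UB_ne : (UB 2 ℤ[X]).map borelSignTwist.toMonoidHom ≠ UB 2 ℤ[X] := by
  set T : BorelGL 2 ℤ[X] := ⟨upperRightHom 1, (upperRightHom_mem_unitri 1).1⟩
  have hT : T ∈ UB 2 ℤ[X] := upperRightHom_mem_unitri 1
  have hφT : borelSignTwist T ∉ UB 2 ℤ[X] := fun h => by
    have h11 : _ = (1 : ℤ[X]) := h.2 1
    rw [Subgroup.coe_subtype, coe_borelSignTwist] at h11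
    norm_num [T, epsUnit_one] at h11
  exact fun h => hφT (h ▸ Subgroup.mem_map_of_mem _ hT)

end Sign

/-- The map `M ↦ ε(M₀₁)·M` is an automorphism of `B_2(ℤ[t])` which does
not preserve `U_2(ℤ[t])`; in particular `U_2(ℤ[t])` is not characteristic in `B_2(ℤ[t])`. -/
theorem statement_6 :
    ∃ φ : ↥(BorelGL 2 (Polynomial ℤ)) ≃* ↥(BorelGL 2 (Polynomial ℤ)),
      (∀ M : ↥(BorelGL 2 (Polynomial ℤ)),
        ((φ M : GL (Fin 2) (Polynomial ℤ)) : Matrix (Fin 2) (Fin 2) (Polynomial ℤ)) =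
          ((epsUnit (((M : GL (Fin 2) (Polynomial ℤ)) :
              Matrix (Fin 2) (Fin 2) (Polynomial ℤ)) 0 1) : Polynomial ℤ)) •
            ((M : GL (Fin 2) (Polynomial ℤ)) : Matrix (Fin 2) (Fin 2) (Polynomial ℤ))) ∧
      Subgroup.map φ.toMonoidHom (UB 2 (Polynomial ℤ)) ≠ UB 2 (Polynomial ℤ) ∧
      ¬ (∀ ψ : ↥(BorelGL 2 (Polynomial ℤ)) ≃* ↥(BorelGL 2 (Polynomial ℤ)),
          Subgroup.map ψ.toMonoidHom (UB 2 (Polynomial ℤ)) = UB 2 (Polynomial ℤ)) :=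
  ⟨borelSignTwist, coe_borelSignTwist, map_borelSignTwist_UB_ne,
    fun h => map_borelSignTwist_UB_ne (h borelSignTwist)⟩
end

section
/- Let p be a prime. For every ring automorphism α of the Laurent polynomial ring F_p[t,t⁻¹]: (i) the additive subgroup {h − α(h) : h ∈ F_p[t,t⁻¹]} has infinite index in (F_p[t,t⁻¹],+); and (ii) the additive subgroup {(h − α(g), g − α(h)) : h, g ∈ F_p[t,t⁻¹]} has infinite index in (F_p[t,t⁻¹],+) × (F_p[t,t⁻¹],+). -/
open Matrix

/-!
An automorphism `α` of `F[T;T⁻¹]` over a finite field `F` sends the unit `T` to a unit `c T^k`,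
and surjectivity forces `k = ±1`; so `α` moves the coefficient at `n` to `k n`, multiplied by
`c^n`. With `N = #Fˣ` we have `c^N = 1`, hence the additive map
`ψ f = (m ↦ f_{mN} + f_{-mN})` satisfies `ψ ∘ α = ψ`. Then `ψ` kills `{h - α h}` and
`(h, g) ↦ ψ h + ψ g` kills `{(h - α g, g - α h)}`, while `ψ` takes infinitely many values
on the monomials `T^{jN}`. Over `ZMod p` every ring automorphism is an algebra automorphism.
-/

open LaurentPolynomial

namespace LaurentPolynomial

theorem coeff_C_mul_T {R : Type*} [Semiring R] (a : R) (m n : ℤ) :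
    (C a * T m).coeff n = if m = n then a else 0 := by
  rw [← single_eq_C_mul_T]
  exact Finsupp.single_apply

theorem C_mul_T_mul_C_mul_T {R : Type*} [CommSemiring R] (a b : R) (m n : ℤ) :
    C a * T m * (C b * T n) = C (a * b) * T (m + n) := by
  rw [map_mul, T_add]
  ring

section CommRing

variable {R : Type*} [CommRing R]

theorem exists_C_mul_T_of_isUnit [IsDomain R] {f : R[T;T⁻¹]}
    (hf : IsUnit f) : ∃ (c : Rˣ) (k : ℤ), f = C (c : R) * T k := by
  obtain ⟨u, rfl⟩ := hf
  obtain ⟨n, f', hf'⟩ := exists_T_pow (u : R[T;T⁻¹])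
  obtain ⟨m, g', hg'⟩ := exists_T_pow (↑u⁻¹ : R[T;T⁻¹])
  -- `f' = u * T n` divides a power of the prime `X`, so it is a unit times a power of `X`.
  have hfg : f' * g' = Polynomial.X ^ (n + m) := by
    apply Polynomial.toLaurent_injective
    rw [map_mul, hf', hg', Polynomial.toLaurent_X_pow, Nat.cast_add, T_add,
      mul_mul_mul_comm, Units.mul_inv, one_mul]
  obtain ⟨i, -, v, hv⟩ := (dvd_prime_pow Polynomial.prime_X _).mp ⟨g', hfg.symm⟩
  obtain ⟨r, hr, hrv⟩ := Polynomial.isUnit_iff.mp (v⁻¹).isUnit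
  have hf'_eq : f' = Polynomial.C r * Polynomial.X ^ i := by
    rw [hrv, ← hv, mul_comm, Units.mul_inv_cancel_right]
  refine ⟨hr.unit, i - n, ?_⟩
  have hu : (u : R[T;T⁻¹]) = Polynomial.toLaurent f' * T (-n) := by
    rw [hf', mul_assoc, ← T_add, add_neg_cancel, T_zero, mul_one]
  rw [hu, hf'_eq, map_mul, Polynomial.toLaurent_C, Polynomial.toLaurent_X_pow, mul_assoc,
    ← T_add, IsUnit.unit_spec, sub_eq_add_neg]

theorem map_T_of_map_T_one {H : Type*} [FunLike H R[T;T⁻¹] R[T;T⁻¹]]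
    [RingHomClass H R[T;T⁻¹] R[T;T⁻¹]] {α : H} {c : Rˣ} {k : ℤ}
    (h1 : α (T 1) = C (c : R) * T k) (n : ℤ) :
    α (T n) = C ((c ^ n : Rˣ) : R) * T (k * n) := by
  have hnat : ∀ n : ℕ, α (T n) = C ((c ^ (n : ℤ) : Rˣ) : R) * T (k * n) := fun n => by
    rw [← mul_one (n : ℤ), ← T_pow, map_pow, h1, mul_pow, ← map_pow, T_pow, mul_one,
      mul_comm k, zpow_natCast, Units.val_pow_eq_pow_val]
  obtain ⟨n, rfl | rfl⟩ := Int.eq_nat_or_neg n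
  · exact hnat n
  · refine ((isUnit_T (n : ℤ)).map α).mul_right_cancel ?_
    rw [← map_mul, ← T_add, neg_add_cancel, T_zero, map_one, hnat, C_mul_T_mul_C_mul_T,
      ← Units.val_mul, ← _root_.zpow_add, neg_add_cancel, zpow_zero, Units.val_one,
      mul_neg, neg_add_cancel, T_zero, map_one, one_mul]

theorem coeff_map_mul_of_map_T_one (α : R[T;T⁻¹] →ₐ[R] R[T;T⁻¹]) {c : Rˣ} {k : ℤ}
    (hk : k ≠ 0) (h1 : α (T 1) = C (c : R) * T k) (f : R[T;T⁻¹]) (n : ℤ) :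
    (α f).coeff (k * n) = ((c ^ n : Rˣ) : R) * f.coeff n := by
  induction f using LaurentPolynomial.induction_on' with
  | add f g hf hg =>
    simp only [map_add, AddMonoidAlgebra.coeff_add, Finsupp.add_apply, hf, hg, mul_add]
  | C_mul_T m a =>
    rw [map_mul α, C_eq_algebraMap, AlgHomClass.commutes, ← C_eq_algebraMap,
      map_T_of_map_T_one h1, ← mul_assoc, ← map_mul, coeff_C_mul_T, coeff_C_mul_T]
    by_cases h : m = n <;> simp [h, hk, mul_comm]

theorem exists_coeff_map_mul_eq [IsDomain R] (α : R[T;T⁻¹] ≃ₐ[R] R[T;T⁻¹]) :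
    ∃ (c : Rˣ) (k : ℤ), (k = 1 ∨ k = -1) ∧
      ∀ f n, (α f).coeff (k * n) = ((c ^ n : Rˣ) : R) * f.coeff n := by
  obtain ⟨c, k, hc⟩ := exists_C_mul_T_of_isUnit ((isUnit_T 1).map α)
  obtain ⟨d, l, hd⟩ := exists_C_mul_T_of_isUnit ((isUnit_T 1).map α.symm)
  -- `α` is surjective, so `T 1 = α (C d * T l) = C (d * c ^ l) * T (k * l)` forces `k * l = 1`.
  have hT : (T 1 : R[T;T⁻¹]) = C ((d * c ^ l : Rˣ) : R) * T (k * l) := by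
    rw [← α.apply_symm_apply (T 1), hd, map_mul α, C_eq_algebraMap, AlgHomClass.commutes,
      ← C_eq_algebraMap, map_T_of_map_T_one hc, ← mul_assoc, ← map_mul, Units.val_mul]
  have hkl : k * l = 1 := by
    have := congrArg degree hT
    rwa [degree_T, degree_C_mul_T _ _ (Units.ne_zero _), WithBot.coe_inj, eq_comm] at this
  have hk := Int.eq_one_or_neg_one_of_mul_eq_one hkl
  refine ⟨c, k, hk, coeff_map_mul_of_map_T_one α.toAlgHom ?_ hc⟩
  rintro rfl
  simp at hkl

end CommRing

theorem exists_coeff_map_eq_of_dvd {F : Type*} [Field F] [Finite F]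
    (α : F[T;T⁻¹] ≃ₐ[F] F[T;T⁻¹]) :
    ∃ k : ℤ, (k = 1 ∨ k = -1) ∧
      ∀ f m, (Nat.card Fˣ : ℤ) ∣ m → (α f).coeff m = f.coeff (k * m) := by
  obtain ⟨c, k, hk, hcoeff⟩ := exists_coeff_map_mul_eq α
  have hkk : k * k = 1 := by rcases hk with rfl | rfl <;> rfl
  refine ⟨k, hk, fun f m hm => ?_⟩
  obtain ⟨t, ht⟩ := dvd_mul_of_dvd_right hm k
  calc (α f).coeff m = (α f).coeff (k * (k * m)) := by rw [← mul_assoc, hkk, one_mul]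
    _ = f.coeff (k * m) := by
      rw [hcoeff, ht, _root_.zpow_mul, zpow_natCast, pow_card_eq_one', _root_.one_zpow,
        Units.val_one, one_mul]

def symmCoeffs (R : Type*) [Semiring R] (N : ℤ) : R[T;T⁻¹] →+ (ℤ → R) where
  toFun f m := f.coeff (m * N) + f.coeff (-(m * N))
  map_zero' := by
    funext m
    simp
  map_add' f g := by
    funext m
    simp only [AddMonoidAlgebra.coeff_add, Finsupp.add_apply, Pi.add_apply]
    abel

theorem symmCoeffs_map {F : Type*} [Field F] [Finite F] (α : F[T;T⁻¹] ≃ₐ[F] F[T;T⁻¹])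
    (f : F[T;T⁻¹]) : symmCoeffs F (Nat.card Fˣ) (α f) = symmCoeffs F (Nat.card Fˣ) f := by
  obtain ⟨k, hk, h⟩ := exists_coeff_map_eq_of_dvd α
  funext m
  simp only [symmCoeffs, AddMonoidHom.coe_mk, ZeroHom.coe_mk]
  rw [h f _ (dvd_mul_left _ _), h f _ (dvd_mul_left _ _).neg_right]
  rcases hk with rfl | rfl
  · simp
  · simp [add_comm]

theorem symmCoeffs_T_mul_apply {R : Type*} [Semiring R] {N a b : ℤ} (hN : N ≠ 0) (ha : 0 < a)
    (hb : 0 < b) : symmCoeffs R N (T (a * N)) b = if a = b then 1 else 0 := by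
  have hne : a * N ≠ -(b * N) := by
    rw [← neg_mul, Ne, mul_left_inj' hN]
    omega
  simp [symmCoeffs, T_apply, hne, mul_left_inj' hN]

theorem infinite_range_symmCoeffs {R : Type*} [Semiring R] [Nontrivial R] {N : ℤ} (hN : N ≠ 0) :
    (Set.range (symmCoeffs R N)).Infinite := by
  refine Set.infinite_of_injective_forall_mem (f := fun j : ℕ => symmCoeffs R N (T ((j + 1) * N)))
    (fun i j hij => ?_) (fun _ => Set.mem_range_self _)
  have := congrFun hij (i + 1)
  dsimp only at this
  rw [symmCoeffs_T_mul_apply hN (by positivity) (by positivity),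
    symmCoeffs_T_mul_apply hN (by positivity) (by positivity)] at this
  by_contra hne
  simp [Ne.symm hne] at this

end LaurentPolynomial

section TwistedDifferences

variable {A B : Type*} [AddCommGroup A] [AddCommGroup B]

theorem infinite_quotient_of_le_ker {S : AddSubgroup A} (ψ : A →+ B) (hS : S ≤ ψ.ker)
    (hψ : (Set.range ψ).Infinite) : Infinite (A ⧸ S) := by
  by_contra hfin
  rw [not_infinite_iff_finite] at hfin
  refine hψ ((Set.finite_range (QuotientAddGroup.lift S ψ hS)).subset ?_)
  rintro _ ⟨a, rfl⟩
  exact ⟨a, rfl⟩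

theorem diffSubgroup_le_ker {f : A →+ A} {ψ : A →+ B} (h : ∀ a, ψ (f a) = ψ a) :
    diffSubgroup f ≤ ψ.ker := by
  rintro _ ⟨a, rfl⟩
  simp [h]

theorem flipDiffSubgroup_le_ker_coprod {f : A →+ A} {ψ : A →+ B} (h : ∀ a, ψ (f a) = ψ a) :
    flipDiffSubgroup f ≤ (ψ.coprod ψ).ker := by
  rintro _ ⟨⟨a, b⟩, rfl⟩
  simp [h]

end TwistedDifferences

/-- For every ring automorphism `α` of `F_p[t,t⁻¹]`, the subgroup
`{h - α h}` has infinite index in `(F_p[t,t⁻¹],+)`, and `{(h - α g, g - α h)}` has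
infinite index in `(F_p[t,t⁻¹],+) × (F_p[t,t⁻¹],+)`. -/
theorem statement_13 (p : ℕ) [Fact p.Prime]
    (α : LaurentPolynomial (ZMod p) ≃+* LaurentPolynomial (ZMod p)) :
    Infinite (LaurentPolynomial (ZMod p) ⧸ diffSubgroup α.toRingHom.toAddMonoidHom) ∧
    Infinite ((LaurentPolynomial (ZMod p) × LaurentPolynomial (ZMod p)) ⧸
      flipDiffSubgroup α.toRingHom.toAddMonoidHom) := by
  set ψ := symmCoeffs (ZMod p) (Nat.card (ZMod p)ˣ)
  have hinv : ∀ f, ψ (α f) = ψ f :=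
    symmCoeffs_map <| AlgEquiv.ofRingEquiv (f := α) fun x => DFunLike.congr_fun
      (Subsingleton.elim ((α : (ZMod p)[T;T⁻¹] →+* (ZMod p)[T;T⁻¹]).comp (algebraMap _ _))
        (algebraMap _ _)) x
  have hrange : (Set.range ψ).Infinite :=
    infinite_range_symmCoeffs (Nat.cast_ne_zero.mpr Nat.card_pos.ne')
  refine ⟨infinite_quotient_of_le_ker ψ (diffSubgroup_le_ker hinv) hrange,
    infinite_quotient_of_le_ker (ψ.coprod ψ) (flipDiffSubgroup_le_ker_coprod hinv)
      (hrange.mono ?_)⟩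
  rintro _ ⟨f, rfl⟩
  exact ⟨(f, 0), by simp⟩
end

section
/- Let F_q be a finite field with q elements. Then: (i) there exists an automorphism Φ of the additive group (F_q[t],+) such that for every a ∈ F_q^× the map r ↦ r − a·Φ(r) is surjective on F_q[t] (so the automorphism r ↦ a·Φ(r) has exactly one twisted conjugacy class); (ii) the group Aff(F_q[t]) admits an automorphism with only finitely many twisted conjugacy classes; and (iii) the group B_2(F_q[t]) admits an automorphism with only finitely many twisted conjugacy classes. In particular, none of (F_q[t],+), Aff(F_q[t]), B_2(F_q[t]) has property R∞. -/
open Matrix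

/-! A countably infinite vector space over a finite field `F` is `F`-linearly isomorphic to the
algebraic closure `F̄`. Multiplication by some `θ ∈ F̄ \ F` is an `F`-linear automorphism `Φ` of
`F̄`, and `1 - a Φ` is multiplication by the nonzero element `1 - aθ`, hence bijective, for every
`a ∈ Fˣ`. Transported to `F_q[t]`, this `Φ` makes `r ↦ r - aΦ(r)` surjective.

The units of `F_q[t]` are the nonzero constants, so applying `Φ` to the upper right entry is an
automorphism of `Aff(F_q[t])` and of `B_2(F_q[t])`. Twisted conjugation by an upper unitriangular
matrix changes that entry by `s v - u Φ(s)`, which by surjectivity can be anything; so every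
twisted class contains one of the finitely many diagonal matrices. -/

open Cardinal in
theorem rank_eq_aleph0_of_countable_of_infinite (F M : Type*) [Field F] [Finite F]
    [AddCommGroup M] [Module F M] [Countable M] [Infinite M] : Module.rank F M = ℵ₀ := by
  refine le_antisymm (rank_le_card F M |>.trans mk_le_aleph0) (not_lt.1 fun h => ?_)
  have : Module.Finite F M := Module.rank_lt_aleph0_iff.1 h
  exact not_finite_iff_infinite.2 ‹_› (Module.finite_of_finite F)

theorem nonempty_linearEquiv_of_countable_of_infinite (F M N : Type*) [Field F] [Finite F]
    [AddCommGroup M] [Module F M] [Countable M] [Infinite M]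
    [AddCommGroup N] [Module F N] [Countable N] [Infinite N] : Nonempty (M ≃ₗ[F] N) :=
  nonempty_linearEquiv_of_lift_rank_eq <| by
    simp [rank_eq_aleph0_of_countable_of_infinite]

instance AlgebraicClosure.countable (F : Type*) [Field F] [Countable F] :
    Countable (AlgebraicClosure F) := by
  rw [← Cardinal.mk_le_aleph0_iff]
  simpa using Algebra.IsAlgebraic.cardinalMk_le_max F (AlgebraicClosure F)

theorem exists_linearEquiv_surjective_sub_smul (F V : Type*) [Field F] [Finite F]
    [AddCommGroup V] [Module F V] [Countable V] [Infinite V] :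
    ∃ Φ : V ≃ₗ[F] V, ∀ a : F, a ≠ 0 → Function.Surjective fun v => v - a • Φ v := by
  let K := AlgebraicClosure F
  obtain ⟨e⟩ := nonempty_linearEquiv_of_countable_of_infinite F V K
  obtain ⟨θ, hθ⟩ := (Set.finite_range (algebraMap F K)).infinite_compl.nonempty
  have hθ0 : θ ≠ 0 := fun h => hθ ⟨0, by simp [h]⟩
  refine ⟨e ≪≫ₗ (LinearEquiv.smulOfNeZero K K θ hθ0).restrictScalars F ≪≫ₗ e.symm,
    fun a ha w => ⟨e.symm ((1 - a • θ)⁻¹ * e w), ?_⟩⟩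
  have hδ : 1 - a • θ ≠ 0 := fun h => hθ ⟨a⁻¹, by
    rw [Algebra.algebraMap_eq_smul_one, sub_eq_zero.1 h, smul_smul, inv_mul_cancel₀ ha,
      one_smul]⟩
  apply e.injective
  simp only [LinearEquiv.trans_apply, LinearEquiv.apply_symm_apply, map_sub, map_smul,
    LinearEquiv.restrictScalars_apply, LinearEquiv.smulOfNeZero_apply, smul_eq_mul]
  rw [← smul_mul_assoc, ← one_sub_mul, mul_inv_cancel_left₀ hδ]

section Twisted

variable {G : Type*} [Group G] (φ : G ≃* G)

theorem twistedConjClass_eq_of_mem {g h : G} (hg : g ∈ TwistedConjClass φ h) :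
    TwistedConjClass φ g = TwistedConjClass φ h := by
  obtain ⟨x, rfl⟩ := hg
  ext k
  constructor
  · rintro ⟨y, rfl⟩
    exact ⟨y * x, by rw [map_mul]; group⟩
  · rintro ⟨z, rfl⟩
    exact ⟨z * x⁻¹, by rw [map_mul, map_inv]; group⟩

theorem ReidemeisterClasses.finite_of_forall_mem {S : Set G} (hS : S.Finite)
    (h : ∀ g, ∃ s ∈ S, g ∈ TwistedConjClass φ s) : (ReidemeisterClasses φ).Finite := by
  refine (hS.image (TwistedConjClass φ)).subset ?_
  rintro _ ⟨g, rfl⟩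
  obtain ⟨s, hs, hg⟩ := h g
  exact ⟨s, hs, (twistedConjClass_eq_of_mem φ hg).symm⟩

end Twisted

theorem addReidemeisterClasses_eq_singleton_univ {A : Type*} [AddCommGroup A] (α : A ≃+ A)
    (h : Function.Surjective fun x => x - α x) : AddReidemeisterClasses α = {Set.univ} := by
  have hclass : ∀ a, AddTwistedConjClass α a = Set.univ := fun a =>
    Set.eq_univ_of_forall fun b => by
      obtain ⟨x, hx⟩ := h (b - a)
      exact ⟨x, by rw [add_sub_right_comm, show x - α x = b - a from hx, sub_add_cancel]⟩
  exact Set.ext fun C => ⟨by rintro ⟨a, rfl⟩; exact hclass a, fun hC => ⟨0, hC ▸ hclass 0⟩⟩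

namespace AffGL

variable {R : Type*} [CommRing R]

noncomputable def mk (u : Rˣ) (r : R) : AffGL R :=
  ⟨Matrix.nonsingInvUnit !![(u : R), r; 0, 1] (by simp [Matrix.det_fin_two_of]), by
    constructor <;> rfl⟩

@[simp]
theorem coe_mk (u : Rˣ) (r : R) :
    (((mk u r : AffGL R) : GL (Fin 2) R) : Matrix (Fin 2) (Fin 2) R) = !![(u : R), r; 0, 1] :=
  rfl

theorem ext_matrix_iff {m n : AffGL R} :
    m = n ↔ ((m : GL (Fin 2) R) : Matrix (Fin 2) (Fin 2) R) = (n : GL (Fin 2) R) := by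
  rw [Subtype.ext_iff, Units.ext_iff]

theorem mk_mul_mk (u u' : Rˣ) (r r' : R) : mk u r * mk u' r' = mk (u * u') (u * r' + r) := by
  rw [ext_matrix_iff]
  ext i j
  fin_cases i <;> fin_cases j <;> simp [Matrix.mul_apply, Fin.sum_univ_two, add_comm]

theorem isUnit_apply_zero_zero (m : AffGL R) :
    IsUnit (((m : GL (Fin 2) R) : Matrix (Fin 2) (Fin 2) R) 0 0) := by
  simpa [Matrix.det_fin_two, m.2.1, m.2.2] using Matrix.isUnits_det_units (m : GL (Fin 2) R)

noncomputable def linearPart (m : AffGL R) : Rˣ := (isUnit_apply_zero_zero m).unit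

def translation (m : AffGL R) : R := ((m : GL (Fin 2) R) : Matrix (Fin 2) (Fin 2) R) 0 1

@[simp]
theorem linearPart_mk (u : Rˣ) (r : R) : linearPart (mk u r) = u := by
  ext; simp [linearPart]

@[simp]
theorem translation_mk (u : Rˣ) (r : R) : translation (mk u r) = r := by
  simp [translation]

@[simp]
theorem mk_linearPart_translation (m : AffGL R) : mk (linearPart m) (translation m) = m := by
  rw [ext_matrix_iff]
  ext i j
  fin_cases i <;> fin_cases j <;> simp [linearPart, translation, m.2.1, m.2.2]

theorem exists_eq_mk (m : AffGL R) : ∃ u r, m = mk u r :=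
  ⟨_, _, (mk_linearPart_translation m).symm⟩

variable (Φ : R ≃+ R) (hΦ : ∀ (u : Rˣ) (r : R), Φ (u * r) = u * Φ r)

noncomputable def twist : AffGL R ≃* AffGL R where
  toFun m := mk (linearPart m) (Φ (translation m))
  invFun m := mk (linearPart m) (Φ.symm (translation m))
  left_inv m := by simp
  right_inv m := by simp
  map_mul' m n := by
    obtain ⟨u, r, rfl⟩ := exists_eq_mk m
    obtain ⟨u', r', rfl⟩ := exists_eq_mk n
    simp [mk_mul_mk, hΦ]

@[simp]
theorem twist_mk (u : Rˣ) (r : R) : twist Φ hΦ (mk u r) = mk u (Φ r) := by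
  simp [twist]

theorem mk_mem_twistedConjClass_twist {u : Rˣ} {r s : R} (hs : s - u * Φ s = r) :
    mk u r ∈ TwistedConjClass (twist Φ hΦ) (mk u 0) :=
  ⟨mk 1 s, by
    rw [eq_mul_inv_iff_mul_eq, twist_mk, mk_mul_mk, mk_mul_mk, ← hs]
    simp⟩

theorem finite_reidemeisterClasses_twist [Finite Rˣ]
    (hsurj : ∀ u : Rˣ, Function.Surjective fun s => s - u * Φ s) :
    (ReidemeisterClasses (twist Φ hΦ)).Finite := by
  refine ReidemeisterClasses.finite_of_forall_mem _ (Set.finite_range fun u => mk u 0) ?_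
  intro m
  obtain ⟨u, r, rfl⟩ := exists_eq_mk m
  obtain ⟨s, hs⟩ := hsurj u r
  exact ⟨mk u 0, ⟨u, rfl⟩, mk_mem_twistedConjClass_twist Φ hΦ hs⟩

end AffGL

namespace BorelGL

variable {R : Type*} [CommRing R]

noncomputable def mk (u v : Rˣ) (r : R) : BorelGL 2 R :=
  ⟨Matrix.nonsingInvUnit !![(u : R), r; 0, v] (by simp [Matrix.det_fin_two_of]),
    blockTriangular_fin_two rfl⟩

@[simp]
theorem coe_mk (u v : Rˣ) (r : R) :
    (((mk u v r : BorelGL 2 R) : GL (Fin 2) R) : Matrix (Fin 2) (Fin 2) R) =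
      !![(u : R), r; 0, v] :=
  rfl

theorem ext_matrix_iff {m n : BorelGL 2 R} :
    m = n ↔ ((m : GL (Fin 2) R) : Matrix (Fin 2) (Fin 2) R) = (n : GL (Fin 2) R) := by
  rw [Subtype.ext_iff, Units.ext_iff]

theorem mk_mul_mk (u u' v v' : Rˣ) (r r' : R) :
    mk u v r * mk u' v' r' = mk (u * u') (v * v') (u * r' + r * v') := by
  rw [ext_matrix_iff]
  ext i j
  fin_cases i <;> fin_cases j <;> simp [Matrix.mul_apply, Fin.sum_univ_two]

theorem apply_one_zero (m : BorelGL 2 R) :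
    ((m : GL (Fin 2) R) : Matrix (Fin 2) (Fin 2) R) 1 0 = 0 :=
  m.2 (show (0 : Fin 2) < 1 by decide)

theorem isUnit_apply_zero_zero_mul_apply_one_one (m : BorelGL 2 R) :
    IsUnit (((m : GL (Fin 2) R) : Matrix (Fin 2) (Fin 2) R) 0 0 *
      ((m : GL (Fin 2) R) : Matrix (Fin 2) (Fin 2) R) 1 1) := by
  simpa [Matrix.det_fin_two, apply_one_zero] using Matrix.isUnits_det_units (m : GL (Fin 2) R)

noncomputable def diagFst (m : BorelGL 2 R) : Rˣ :=
  (isUnit_of_mul_isUnit_left (isUnit_apply_zero_zero_mul_apply_one_one m)).unit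

noncomputable def diagSnd (m : BorelGL 2 R) : Rˣ :=
  (isUnit_of_mul_isUnit_right (isUnit_apply_zero_zero_mul_apply_one_one m)).unit

def offDiag (m : BorelGL 2 R) : R := ((m : GL (Fin 2) R) : Matrix (Fin 2) (Fin 2) R) 0 1

@[simp]
theorem diagFst_mk (u v : Rˣ) (r : R) : diagFst (mk u v r) = u := by
  ext; simp [diagFst]

@[simp]
theorem diagSnd_mk (u v : Rˣ) (r : R) : diagSnd (mk u v r) = v := by
  ext; simp [diagSnd]

@[simp]
theorem offDiag_mk (u v : Rˣ) (r : R) : offDiag (mk u v r) = r := by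
  simp [offDiag]

@[simp]
theorem mk_diagFst_diagSnd_offDiag (m : BorelGL 2 R) :
    mk (diagFst m) (diagSnd m) (offDiag m) = m := by
  rw [ext_matrix_iff]
  ext i j
  fin_cases i <;> fin_cases j <;> simp [diagFst, diagSnd, offDiag, apply_one_zero]

theorem exists_eq_mk (m : BorelGL 2 R) : ∃ u v r, m = mk u v r :=
  ⟨_, _, _, (mk_diagFst_diagSnd_offDiag m).symm⟩

variable (Φ : R ≃+ R) (hΦ : ∀ (u : Rˣ) (r : R), Φ (u * r) = u * Φ r)

noncomputable def twist : BorelGL 2 R ≃* BorelGL 2 R where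
  toFun m := mk (diagFst m) (diagSnd m) (Φ (offDiag m))
  invFun m := mk (diagFst m) (diagSnd m) (Φ.symm (offDiag m))
  left_inv m := by simp
  right_inv m := by simp
  map_mul' m n := by
    obtain ⟨u, v, r, rfl⟩ := exists_eq_mk m
    obtain ⟨u', v', r', rfl⟩ := exists_eq_mk n
    simp [mk_mul_mk, hΦ, mul_comm _ (v' : R)]

@[simp]
theorem twist_mk (u v : Rˣ) (r : R) : twist Φ hΦ (mk u v r) = mk u v (Φ r) := by
  simp [twist]

theorem mk_mem_twistedConjClass_twist {u v : Rˣ} {r s : R} (hs : s * v - u * Φ s = r) :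
    mk u v r ∈ TwistedConjClass (twist Φ hΦ) (mk u v 0) :=
  ⟨mk 1 1 s, by
    rw [eq_mul_inv_iff_mul_eq, twist_mk, mk_mul_mk, mk_mul_mk, ← hs]
    simp⟩

theorem finite_reidemeisterClasses_twist [Finite Rˣ]
    (hsurj : ∀ u : Rˣ, Function.Surjective fun s => s - u * Φ s) :
    (ReidemeisterClasses (twist Φ hΦ)).Finite := by
  refine ReidemeisterClasses.finite_of_forall_mem _
    (Set.finite_range fun p : Rˣ × Rˣ => mk p.1 p.2 0) ?_
  intro m
  obtain ⟨u, v, r, rfl⟩ := exists_eq_mk m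
  obtain ⟨s, hs⟩ := hsurj (u * v⁻¹) (r * v⁻¹)
  refine ⟨mk u v 0, ⟨(u, v), rfl⟩, mk_mem_twistedConjClass_twist (s := s) Φ hΦ ?_⟩
  simp only [Units.val_mul] at hs
  linear_combination (v : R) * hs + (u * Φ s + r) * v.inv_mul

end BorelGL

namespace Polynomial

instance countable {R : Type*} [Semiring R] [Countable R] : Countable R[X] := by
  rw [← Cardinal.mk_le_aleph0_iff]
  simpa using cardinalMk_le_max (R := R)

variable {K : Type*} [Field K]

instance finite_units [Finite K] : Finite K[X]ˣ :=
  .of_injective (fun u : K[X]ˣ => (u : K[X]).coeff 0) fun u v h => Units.ext <| by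
    rw [eq_C_of_natDegree_eq_zero (natDegree_eq_zero_of_isUnit u.isUnit),
      eq_C_of_natDegree_eq_zero (natDegree_eq_zero_of_isUnit v.isUnit)]
    exact congrArg C h

theorem exists_eq_C_of_unit (u : K[X]ˣ) : ∃ c : K, c ≠ 0 ∧ (u : K[X]) = C c := by
  obtain ⟨c, hc, hcu⟩ := isUnit_iff.1 u.isUnit
  exact ⟨c, hc.ne_zero, hcu.symm⟩

theorem _root_.LinearMap.map_units_mul_polynomial (Φ : K[X] →ₗ[K] K[X]) (u : K[X]ˣ)
    (r : K[X]) : Φ (u * r) = u * Φ r := by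
  obtain ⟨c, -, hc⟩ := exists_eq_C_of_unit u
  rw [hc, ← smul_eq_C_mul, ← smul_eq_C_mul, map_smul]

end Polynomial

/-- Over `F_q[t]`: (i) there is an additive automorphism `Φ` of
`(F_q[t],+)` such that for every `a ∈ F_qˣ` the map `r ↦ r - a·Φ(r)` is surjective (so the
automorphism `r ↦ a·Φ(r)` has exactly one twisted conjugacy class); (ii) `Aff(F_q[t])` has
an automorphism with finitely many twisted conjugacy classes; (iii) so does `B_2(F_q[t])`.
In particular none of `(F_q[t],+)`, `Aff(F_q[t])`, `B_2(F_q[t])` has property `R∞`. -/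
theorem statement_17 (Fq : Type*) [Field Fq] [Fintype Fq] :
    (∃ Φ : Polynomial Fq ≃+ Polynomial Fq,
      ∀ a : Fqˣ,
        (Function.Surjective
          (fun r : Polynomial Fq => r - Polynomial.C (a : Fq) * Φ r)) ∧
        (∃ β : Polynomial Fq ≃+ Polynomial Fq,
          (∀ r : Polynomial Fq, β r = Polynomial.C (a : Fq) * Φ r) ∧
          (∃! C : Set (Polynomial Fq), C ∈ AddReidemeisterClasses β))) ∧
    (∃ ψ : ↥(AffGL (Polynomial Fq)) ≃* ↥(AffGL (Polynomial Fq)),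
      (ReidemeisterClasses ψ).Finite) ∧
    (∃ ψ : ↥(BorelGL 2 (Polynomial Fq)) ≃* ↥(BorelGL 2 (Polynomial Fq)),
      (ReidemeisterClasses ψ).Finite) ∧
    ¬ AddPropertyRInfinity (Polynomial Fq) ∧
    ¬ PropertyRInfinity ↥(AffGL (Polynomial Fq)) ∧
    ¬ PropertyRInfinity ↥(BorelGL 2 (Polynomial Fq)) := by
  obtain ⟨Φ, hΦ⟩ := exists_linearEquiv_surjective_sub_smul Fq (Polynomial Fq)
  have hsurj (a : Fq) (ha : a ≠ 0) : Function.Surjective fun r => r - Polynomial.C a * Φ r := by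
    simpa only [← Polynomial.smul_eq_C_mul] using hΦ a ha
  have hsurj_units (u : (Polynomial Fq)ˣ) : Function.Surjective fun r => r - u * Φ r := by
    obtain ⟨c, hc, hcu⟩ := Polynomial.exists_eq_C_of_unit u
    rw [hcu]
    exact hsurj c hc
  have hunit_mul := Φ.toLinearMap.map_units_mul_polynomial
  have hAff := AffGL.finite_reidemeisterClasses_twist Φ.toAddEquiv hunit_mul hsurj_units
  have hBorel := BorelGL.finite_reidemeisterClasses_twist Φ.toAddEquiv hunit_mul hsurj_units
  let β (a : Fqˣ) : Polynomial Fq ≃+ Polynomial Fq :=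
    (Φ ≪≫ₗ .smulOfNeZero _ _ (a : Fq) a.ne_zero).toAddEquiv
  have hclasses (a : Fqˣ) : AddReidemeisterClasses (β a) = {Set.univ} :=
    addReidemeisterClasses_eq_singleton_univ _ (by simpa [β] using hΦ a a.ne_zero)
  refine ⟨⟨Φ.toAddEquiv, fun a => ⟨hsurj a a.ne_zero, β a, fun r => ?_, ?_⟩⟩, ⟨_, hAff⟩,
      ⟨_, hBorel⟩, fun h => h (β 1) (hclasses 1 ▸ Set.finite_singleton _), fun h => h _ hAff,
      fun h => h _ hBorel⟩
  · simp [β, Polynomial.smul_eq_C_mul]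
  · rw [hclasses a]
    exact ⟨_, rfl, fun _ => id⟩
end
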